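/- arXiv:1509.05706 — 14 statements merged into one kernel-verified Lean document; each statement's English description precedes it below -/
import Mathlib

section
/- In the modification setup, the groupoid (G,*) is a loop: 1*x = x = x*1 for every x ∈ G, and for all a, b ∈ G there exists a unique x ∈ G with a*x = b and a unique y ∈ G with y*a = b. -/
/-!
Both translations of `(G, *)` reduce to maps of the form `x ↦ x * ν x`, where `ν` takes values in
`K` and is constant on left cosets of `K`: for left division `ν = μ a`, and for right division
`ν = (μ · a)`, after moving the central factor `μ y a` past `a`. Such a map preserves each coset
`xK`, and on it `ν` is a constant element of `K`, so it is a bijection.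
-/

theorem Subgroup.bijective_mul_apply {G : Type*} [Group G] (K : Subgroup G) {ν : G → G}
    (hνK : ∀ x, ν x ∈ K) (hν : ∀ x y, x⁻¹ * y ∈ K → ν x = ν y) :
    Function.Bijective fun x => x * ν x := by
  refine ⟨fun x y hxy => ?_, fun b => ⟨b * (ν b)⁻¹, ?_⟩⟩
  · have hcoset : x⁻¹ * y ∈ K := by
      have : x⁻¹ * y = ν x * (ν y)⁻¹ := by
        rw [eq_mul_inv_iff_mul_eq, mul_assoc, inv_mul_eq_iff_eq_mul]
        exact hxy.symm
      exact this ▸ K.mul_mem (hνK x) (K.inv_mem (hνK y))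
    simpa [hν x y hcoset] using hxy
  · have : ν (b * (ν b)⁻¹) = ν b := hν _ _ (by simp [hνK b])
    simp [this]

theorem stmt_0_general {G : Type*} [Group G] (Z K : Subgroup G)
    (hZK : Z ≤ K)
    (hZcentral : Z ≤ Subgroup.center G)
    (μ : G → G → G)
    (hμZ : ∀ x y : G, μ x y ∈ Z)
    (hμK : ∀ x x' y y' : G, x⁻¹ * x' ∈ K → y⁻¹ * y' ∈ K → μ x y = μ x' y')
    (hμ1 : ∀ x : G, μ x 1 = 1) (hμ1' : ∀ x : G, μ 1 x = 1)
    (star : G → G → G) (hstar : ∀ x y : G, star x y = x * y * μ x y) :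
    (∀ x : G, star 1 x = x ∧ star x 1 = x) ∧
    (∀ a b : G, ∃! x : G, star a x = b) ∧
    (∀ a b : G, ∃! y : G, star y a = b) := by
  have hμK' : ∀ x y, μ x y ∈ K := fun x y => hZK (hμZ x y)
  have hrefl : ∀ a : G, a⁻¹ * a ∈ K := fun a => by simp
  refine ⟨fun x => ⟨by simp [hstar, hμ1'], by simp [hstar, hμ1]⟩, fun a b => ?_, fun a b => ?_⟩
  · have hleft : (star a ·) = (a * ·) ∘ fun x => x * μ a x :=
      funext fun x => by simp [hstar, mul_assoc]
    have hbij := (Group.mulLeft_bijective a).comp <|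
      K.bijective_mul_apply (hμK' a) fun x y h => hμK a a x y (hrefl a) h
    exact (hleft ▸ hbij).existsUnique b
  · have hright : (star · a) = (· * a) ∘ fun y => y * μ y a := funext fun y => by
      simp only [hstar, Function.comp_apply, mul_assoc,
        (Subgroup.mem_center_iff.mp (hZcentral (hμZ y a)) a)]
    have hbij := (Group.mulRight_bijective a).comp <|
      K.bijective_mul_apply (hμK' · a) fun x y h => hμK x y a a h (hrefl a)
    exact (hright ▸ hbij).existsUnique b

/-- In the modification setup, the groupoid (G,*) is a loop. -/
theorem stmt_0 {G : Type*} [Group G] (Z K N : Subgroup G)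
    (hZK : Z ≤ K) (hKN : K ≤ N)
    (hNnormal : N.Normal)
    (hNab : ∀ a ∈ N, ∀ b ∈ N, a * b = b * a)
    (hGN : ∀ x y : G, x⁻¹ * y⁻¹ * x * y ∈ N)
    (hZcentral : Z ≤ Subgroup.center G)
    (hKnormal : K.Normal)
    (hNK : ∀ n ∈ N, ∀ g : G, n⁻¹ * g⁻¹ * n * g ∈ K)
    (μ : G → G → G)
    (hμZ : ∀ x y : G, μ x y ∈ Z)
    (hμK : ∀ x x' y y' : G, x⁻¹ * x' ∈ K → y⁻¹ * y' ∈ K → μ x y = μ x' y')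
    (hμ1 : ∀ x : G, μ x 1 = 1) (hμ1' : ∀ x : G, μ 1 x = 1)
    (star : G → G → G) (hstar : ∀ x y : G, star x y = x * y * μ x y) :
    (∀ x : G, star 1 x = x ∧ star x 1 = x) ∧
    (∀ a b : G, ∃! x : G, star a x = b) ∧
    (∀ a b : G, ∃! y : G, star y a = b) :=
  stmt_0_general Z K hZK hZcentral μ hμZ hμK hμ1 hμ1' star hstar
end

section
/- In the modification setup, every z ∈ Z satisfies z*x = x*z, z*(x*y) = (z*x)*y, x*(z*y) = (x*z)*y, and x*(y*z) = (x*y)*z for all x, y ∈ G; that is, Z is contained in the center of the loop (G,*). -/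
/-! For central `z ∈ K`, normalization gives `μ z x = μ x z = 1`, and multiplying an argument
of `μ` by `z` does not change its value because `μ` only sees `K`-cosets. So a factor `z` in
either argument of `*` can be pulled out in front, and as `z` commutes with all of `G`, each
identity reduces to associativity in `G`. -/

namespace ModifiedMul

variable {G : Type*} [Group G]

def modMul (μ : G → G → G) (x y : G) : G := x * y * μ x y

variable {K : Subgroup G} {μ : G → G → G}
  (hμK : ∀ x x' y y' : G, x⁻¹ * x' ∈ K → y⁻¹ * y' ∈ K → μ x y = μ x' y')
include hμK

theorem mu_mul_mem_left {k : G} (hk : k ∈ K) (x y : G) : μ (x * k) y = μ x y :=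
  (hμK x (x * k) y y (by simpa using hk) (by simp)).symm

theorem mu_mul_mem_right {k : G} (hk : k ∈ K) (x y : G) : μ x (y * k) = μ x y :=
  (hμK x x y (y * k) (by simp) (by simpa using hk)).symm

theorem mu_eq_one_of_mem_left (hμ1' : ∀ x : G, μ 1 x = 1) {k : G} (hk : k ∈ K) (x : G) :
    μ k x = 1 := by
  simpa [hμ1'] using mu_mul_mem_left hμK hk 1 x

theorem mu_eq_one_of_mem_right (hμ1 : ∀ x : G, μ x 1 = 1) {k : G} (hk : k ∈ K) (x : G) :
    μ x k = 1 := by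
  simpa [hμ1] using mu_mul_mem_right hμK hk x 1

variable {z : G} (hzK : z ∈ K) (hzC : z ∈ Subgroup.center G)
include hzK hzC

theorem modMul_mul_left (x y : G) : modMul μ (z * x) y = z * modMul μ x y := by
  have hzx : z * x = x * z := (Subgroup.mem_center_iff.mp hzC x).symm
  rw [modMul, modMul, hzx, mu_mul_mem_left hμK hzK, ← hzx]
  group

theorem modMul_mul_right (x y : G) : modMul μ x (z * y) = z * modMul μ x y := by
  have hzx : z * x = x * z := (Subgroup.mem_center_iff.mp hzC x).symm
  have hzy : z * y = y * z := (Subgroup.mem_center_iff.mp hzC y).symm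
  rw [modMul, modMul, hzy, mu_mul_mem_right hμK hzK, ← hzy, ← mul_assoc x z y, ← hzx]
  group

end ModifiedMul

open ModifiedMul in
theorem stmt_1_general {G : Type*} [Group G] (Z K : Subgroup G)
    (hZK : Z ≤ K)
    (hZcentral : Z ≤ Subgroup.center G)
    (μ : G → G → G)
    (hμK : ∀ x x' y y' : G, x⁻¹ * x' ∈ K → y⁻¹ * y' ∈ K → μ x y = μ x' y')
    (hμ1 : ∀ x : G, μ x 1 = 1) (hμ1' : ∀ x : G, μ 1 x = 1)
    (star : G → G → G) (hstar : ∀ x y : G, star x y = x * y * μ x y) :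
    ∀ z ∈ Z, ∀ x y : G,
      star z x = star x z ∧
      star z (star x y) = star (star z x) y ∧
      star x (star z y) = star (star x z) y ∧
      star x (star y z) = star (star x y) z := by
  obtain rfl : star = modMul μ := funext₂ hstar
  intro z hz x y
  have hzK := hZK hz
  have hzC := hZcentral hz
  have hcomm : ∀ g : G, g * z = z * g := Subgroup.mem_center_iff.mp hzC
  have hleft : ∀ g, modMul μ z g = z * g := fun g => by
    rw [modMul, mu_eq_one_of_mem_left hμK hμ1' hzK, mul_one]
  have hright : ∀ g, modMul μ g z = z * g := fun g => by
    rw [modMul, mu_eq_one_of_mem_right hμK hμ1 hzK, mul_one, hcomm]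
  have hmulL := modMul_mul_left hμK hzK hzC
  have hmulR := modMul_mul_right hμK hzK hzC
  exact ⟨by rw [hleft, hright], by rw [hleft, hleft, hmulL],
    by rw [hleft, hright, hmulR, hmulL], by rw [hright, hright, hmulR]⟩

/-- In the modification setup, Z is contained in the center of the loop (G,*). -/
theorem stmt_1 {G : Type*} [Group G] (Z K N : Subgroup G)
    (hZK : Z ≤ K) (hKN : K ≤ N)
    (hNnormal : N.Normal)
    (hNab : ∀ a ∈ N, ∀ b ∈ N, a * b = b * a)
    (hGN : ∀ x y : G, x⁻¹ * y⁻¹ * x * y ∈ N)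
    (hZcentral : Z ≤ Subgroup.center G)
    (hKnormal : K.Normal)
    (hNK : ∀ n ∈ N, ∀ g : G, n⁻¹ * g⁻¹ * n * g ∈ K)
    (μ : G → G → G)
    (hμZ : ∀ x y : G, μ x y ∈ Z)
    (hμK : ∀ x x' y y' : G, x⁻¹ * x' ∈ K → y⁻¹ * y' ∈ K → μ x y = μ x' y')
    (hμ1 : ∀ x : G, μ x 1 = 1) (hμ1' : ∀ x : G, μ 1 x = 1)
    (star : G → G → G) (hstar : ∀ x y : G, star x y = x * y * μ x y) :
    ∀ z ∈ Z, ∀ x y : G,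
      star z x = star x z ∧
      star z (star x y) = star (star z x) y ∧
      star x (star z y) = star (star x z) y ∧
      star x (star y z) = star (star x y) z :=
  stmt_1_general Z K hZK hZcentral μ hμK hμ1 hμ1' star hstar
end

section
/- In the modification setup, the left and right inner mappings pairwise commute: for all x, y, u, v ∈ G, L(x,y)∘L(u,v) = L(u,v)∘L(x,y), R(x,y)∘R(u,v) = R(u,v)∘R(x,y), and L(x,y)∘R(u,v) = R(u,v)∘L(x,y) as maps G → G; hence the group of permutations of G generated by all L(x,y) and R(x,y) is abelian. -/
/-!
The associator `A` of `x * y = x y μ(x, y)` takes values in `Z`, so it is central and lies in `K`.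
Since `μ` only sees cosets of `K` (a normal subgroup), `A x y w` is unchanged when `w` is
multiplied on the right by an element of `K`, and so is `A w x y`. Each inner mapping is
`w ↦ w · c(w)` with `c` central and `K`-valued, and two such maps, each blind to the other's
correction, commute.
-/

theorem comp_mul_right_comm {G : Type*} [Monoid G] {f g : G → G}
    (hfg : ∀ w, f (w * g w) = f w) (hgf : ∀ w, g (w * f w) = g w)
    (hcomm : ∀ w, Commute (f w) (g w)) :
    (fun w => w * f w) ∘ (fun w => w * g w) = (fun w => w * g w) ∘ (fun w => w * f w) := by
  funext w
  simp only [Function.comp_apply, hfg, hgf, mul_assoc, (hcomm w).eq]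

section Associator

variable {G : Type*} [Group G]

def twistedAssociator (μ : G → G → G) (x y z : G) : G :=
  μ x y * μ (x * y) z * (μ x (y * z))⁻¹ * (μ y z)⁻¹

theorem twistedAssociator_mem {μ : G → G → G} {Z : Subgroup G} (hμZ : ∀ x y, μ x y ∈ Z)
    (x y z : G) :
    twistedAssociator μ x y z ∈ Z :=
  mul_mem (mul_mem (mul_mem (hμZ x y) (hμZ _ z)) (inv_mem (hμZ x _))) (inv_mem (hμZ y z))

variable {K : Subgroup G} {μ : G → G → G}
  (hμK : ∀ x x' y y' : G, x⁻¹ * x' ∈ K → y⁻¹ * y' ∈ K → μ x y = μ x' y')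
include hμK

theorem mu_mul_left_eq {x a : G} (ha : a ∈ K) (y : G) : μ (x * a) y = μ x y :=
  hμK _ _ _ _ (by simpa [mul_assoc] using inv_mem ha) (by simp [one_mem])

theorem mu_mul_right_eq (x : G) {y a : G} (ha : a ∈ K) : μ x (y * a) = μ x y :=
  hμK _ _ _ _ (by simp [one_mem]) (by simpa [mul_assoc] using inv_mem ha)

theorem twistedAssociator_mul_right_eq (x y z : G) {a : G} (ha : a ∈ K) :
    twistedAssociator μ x y (z * a) = twistedAssociator μ x y z := by
  simp only [twistedAssociator, ← mul_assoc y z a, mu_mul_right_eq hμK _ ha]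

theorem twistedAssociator_mul_left_eq (hK : K.Normal) {x a : G} (ha : a ∈ K) (y z : G) :
    twistedAssociator μ (x * a) y z = twistedAssociator μ x y z := by
  have hconj : x * a * y = x * y * (y⁻¹ * a * y) := by group
  have ha' : y⁻¹ * a * y ∈ K := by simpa using hK.conj_mem a ha y⁻¹
  simp only [twistedAssociator, hconj, mu_mul_left_eq hμK ha, mu_mul_left_eq hμK ha']

end Associator

theorem stmt_3_general {G : Type*} [Group G] (Z K : Subgroup G)
    (hZK : Z ≤ K)
    (hZcentral : Z ≤ Subgroup.center G)
    (hKnormal : K.Normal)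
    (μ : G → G → G)
    (hμZ : ∀ x y : G, μ x y ∈ Z)
    (hμK : ∀ x x' y y' : G, x⁻¹ * x' ∈ K → y⁻¹ * y' ∈ K → μ x y = μ x' y')
    (A : G → G → G → G)
    (hA : ∀ x y z : G, A x y z = μ x y * μ (x * y) z * (μ x (y * z))⁻¹ * (μ y z)⁻¹)
    (L : G → G → G → G) (hL : ∀ x y w : G, L x y w = w * A x y w)
    (R : G → G → G → G) (hR : ∀ x y w : G, R x y w = w * A w x y) :
    ∀ x y u v : G,
      L x y ∘ L u v = L u v ∘ L x y ∧
      R x y ∘ R u v = R u v ∘ R x y ∧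
      L x y ∘ R u v = R u v ∘ L x y := by
  obtain rfl : A = twistedAssociator μ := by funext x y z; exact hA x y z
  obtain rfl : L = fun x y w => w * twistedAssociator μ x y w := by funext x y w; exact hL x y w
  obtain rfl : R = fun x y w => w * twistedAssociator μ w x y := by funext x y w; exact hR x y w
  have hmemK a b c : twistedAssociator μ a b c ∈ K := hZK (twistedAssociator_mem hμZ a b c)
  have hcomm a b c d e f : Commute (twistedAssociator μ a b c) (twistedAssociator μ d e f) :=
    Subgroup.mem_center_iff.mp (hZcentral (twistedAssociator_mem hμZ d e f)) _
  have right a b w c d e : twistedAssociator μ a b (w * twistedAssociator μ c d e) =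
      twistedAssociator μ a b w :=
    twistedAssociator_mul_right_eq hμK _ _ _ (hmemK ..)
  have left w a b c d e : twistedAssociator μ (w * twistedAssociator μ c d e) a b =
      twistedAssociator μ w a b :=
    twistedAssociator_mul_left_eq hμK hKnormal (hmemK ..) _ _
  intro x y u v
  exact ⟨comp_mul_right_comm (fun _ => right ..) (fun _ => right ..) (fun _ => hcomm ..),
    comp_mul_right_comm (fun _ => left ..) (fun _ => left ..) (fun _ => hcomm ..),
    comp_mul_right_comm (fun _ => right ..) (fun _ => left ..) (fun _ => hcomm ..)⟩

/-- In the modification setup, the left and right inner mappings pairwise commute. -/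
theorem stmt_3 {G : Type*} [Group G] (Z K N : Subgroup G)
    (hZK : Z ≤ K) (hKN : K ≤ N)
    (hNnormal : N.Normal)
    (hNab : ∀ a ∈ N, ∀ b ∈ N, a * b = b * a)
    (hGN : ∀ x y : G, x⁻¹ * y⁻¹ * x * y ∈ N)
    (hZcentral : Z ≤ Subgroup.center G)
    (hKnormal : K.Normal)
    (hNK : ∀ n ∈ N, ∀ g : G, n⁻¹ * g⁻¹ * n * g ∈ K)
    (μ : G → G → G)
    (hμZ : ∀ x y : G, μ x y ∈ Z)
    (hμK : ∀ x x' y y' : G, x⁻¹ * x' ∈ K → y⁻¹ * y' ∈ K → μ x y = μ x' y')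
    (hμ1 : ∀ x : G, μ x 1 = 1) (hμ1' : ∀ x : G, μ 1 x = 1)
    (A : G → G → G → G)
    (hA : ∀ x y z : G, A x y z = μ x y * μ (x * y) z * (μ x (y * z))⁻¹ * (μ y z)⁻¹)
    (L : G → G → G → G) (hL : ∀ x y w : G, L x y w = w * A x y w)
    (R : G → G → G → G) (hR : ∀ x y w : G, R x y w = w * A w x y) :
    ∀ x y u v : G,
      L x y ∘ L u v = L u v ∘ L x y ∧
      R x y ∘ R u v = R u v ∘ R x y ∧
      L x y ∘ R u v = R u v ∘ L x y :=
  stmt_3_general Z K hZK hZcentral hKnormal μ hμZ hμK A hA L hL R hR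
end

section
/- In the modification setup, for all x, y ∈ G one has x * (y^x · μ(y,x) · μ(x,y^x)⁻¹) = y * x; that is, the middle inner mapping T(x) of the loop (G,*) (the unique solution u of x*u = y*x, as a function of y) is given by T(x)y = y^x · μ(y,x) · μ(x,y^x)⁻¹. -/
theorem Subgroup.inv_mul_mem_of_mem_of_mem {G : Type*} [Group G] (K : Subgroup G) (v : G)
    {a b : G} (ha : a ∈ K) (hb : b ∈ K) : (v * a * b⁻¹)⁻¹ * v ∈ K := by
  have h : (v * a * b⁻¹)⁻¹ * v = b * a⁻¹ := by group
  rw [h]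
  exact K.mul_mem hb (K.inv_mem ha)

theorem stmt_4_general {G : Type*} [Group G] (Z K : Subgroup G)
    (hZK : Z ≤ K)
    (μ : G → G → G)
    (hμZ : ∀ x y : G, μ x y ∈ Z)
    (hμK : ∀ x x' y y' : G, x⁻¹ * x' ∈ K → y⁻¹ * y' ∈ K → μ x y = μ x' y')
    (star : G → G → G) (hstar : ∀ x y : G, star x y = x * y * μ x y) :
    ∀ x y : G,
      star x ((x⁻¹ * y * x) * μ y x * (μ x (x⁻¹ * y * x))⁻¹) = star y x := by
  intro x y
  set v := x⁻¹ * y * x with hv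
  -- the correction factors lie in `Z ≤ K`, so they do not change `μ x ·`
  have hμv : μ x (v * μ y x * (μ x v)⁻¹) = μ x v :=
    hμK x x _ v (by simp)
      (K.inv_mul_mem_of_mem_of_mem v (hZK (hμZ y x)) (hZK (hμZ x v)))
  rw [hstar, hstar, hμv, hv]
  group

/-- In the modification setup, the middle inner mapping of the loop (G,*) is given by
T(x)y = y^x · μ(y,x) · μ(x,y^x)⁻¹. -/
theorem stmt_4 {G : Type*} [Group G] (Z K N : Subgroup G)
    (hZK : Z ≤ K) (hKN : K ≤ N)
    (hNnormal : N.Normal)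
    (hNab : ∀ a ∈ N, ∀ b ∈ N, a * b = b * a)
    (hGN : ∀ x y : G, x⁻¹ * y⁻¹ * x * y ∈ N)
    (hZcentral : Z ≤ Subgroup.center G)
    (hKnormal : K.Normal)
    (hNK : ∀ n ∈ N, ∀ g : G, n⁻¹ * g⁻¹ * n * g ∈ K)
    (μ : G → G → G)
    (hμZ : ∀ x y : G, μ x y ∈ Z)
    (hμK : ∀ x x' y y' : G, x⁻¹ * x' ∈ K → y⁻¹ * y' ∈ K → μ x y = μ x' y')
    (hμ1 : ∀ x : G, μ x 1 = 1) (hμ1' : ∀ x : G, μ 1 x = 1)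
    (star : G → G → G) (hstar : ∀ x y : G, star x y = x * y * μ x y) :
    ∀ x y : G,
      star x ((x⁻¹ * y * x) * μ y x * (μ x (x⁻¹ * y * x))⁻¹) = star y x :=
  stmt_4_general Z K hZK μ hμZ hμK star hstar
end

section
/- In the modification setup, assume conditions (C1) and (C2). Then for all x, y, z ∈ G such that at least one of x, y, z lies in N, one has (x*y)*z = x*(y*z); that is, N is contained in the nucleus of the loop (G,*). -/
/-!
Since `μ` takes central values in `K` and only sees `K`-cosets, the correction factor inside
an argument of `μ` can be dropped, so `(x*y)*z = x y z · μ(x,y) μ(xy,z)` and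
`x*(y*z) = x y z · μ(y,z) μ(x,yz)`. When one of `x, y, z` lies in `N`, (C1) and (C2) split
`μ(xy,z)` and `μ(x,yz)`, and both sides become `x y z · μ(x,y) μ(x,z) μ(y,z)`.
-/

section CosetInvariant

variable {G : Type*} [Group G] (K : Subgroup G) {μ : G → G → G}

lemma apply_mul_fst_of_mem
    (hμK : ∀ x x' y y' : G, x⁻¹ * x' ∈ K → y⁻¹ * y' ∈ K → μ x y = μ x' y')
    {c : G} (hc : c ∈ K) (a b : G) : μ (a * c) b = μ a b :=
  (hμK a (a * c) b b (by rwa [inv_mul_cancel_left]) (by rw [inv_mul_cancel]; exact K.one_mem)).symm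

lemma apply_mul_snd_of_mem
    (hμK : ∀ x x' y y' : G, x⁻¹ * x' ∈ K → y⁻¹ * y' ∈ K → μ x y = μ x' y')
    {c : G} (hc : c ∈ K) (a b : G) : μ a (b * c) = μ a b :=
  (hμK a a b (b * c) (by rw [inv_mul_cancel]; exact K.one_mem) (by rwa [inv_mul_cancel_left])).symm

lemma modified_mul_assoc_left (hcent : ∀ x y : G, μ x y ∈ Subgroup.center G)
    (hmem : ∀ x y : G, μ x y ∈ K)
    (hμK : ∀ x x' y y' : G, x⁻¹ * x' ∈ K → y⁻¹ * y' ∈ K → μ x y = μ x' y') (x y z : G) :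
    x * y * μ x y * z * μ (x * y * μ x y) z = x * y * z * (μ x y * μ (x * y) z) := by
  rw [apply_mul_fst_of_mem K hμK (hmem x y), mul_assoc (x * y) (μ x y) z,
    ← Subgroup.mem_center_iff.mp (hcent x y) z]
  simp only [mul_assoc]

lemma modified_mul_assoc_right (hmem : ∀ x y : G, μ x y ∈ K)
    (hμK : ∀ x x' y y' : G, x⁻¹ * x' ∈ K → y⁻¹ * y' ∈ K → μ x y = μ x' y') (x y z : G) :
    x * (y * z * μ y z) * μ x (y * z * μ y z) = x * y * z * (μ y z * μ x (y * z)) := by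
  rw [apply_mul_snd_of_mem K hμK (hmem y z)]
  simp only [mul_assoc]

end CosetInvariant

theorem stmt_5_general {G : Type*} [Group G] (Z K N : Subgroup G)
    (hZK : Z ≤ K)
    (hZcentral : Z ≤ Subgroup.center G)
    (μ : G → G → G)
    (hμZ : ∀ x y : G, μ x y ∈ Z)
    (hμK : ∀ x x' y y' : G, x⁻¹ * x' ∈ K → y⁻¹ * y' ∈ K → μ x y = μ x' y')
    (star : G → G → G) (hstar : ∀ x y : G, star x y = x * y * μ x y)
    (hC1 : ∀ x y z : G, (x ∈ N ∨ y ∈ N ∨ z ∈ N) → μ (x * y) z = μ x z * μ y z)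
    (hC2 : ∀ x y z : G, (x ∈ N ∨ y ∈ N ∨ z ∈ N) → μ x (y * z) = μ x y * μ x z) :
    ∀ x y z : G, (x ∈ N ∨ y ∈ N ∨ z ∈ N) →
      star (star x y) z = star x (star y z) := by
  intro x y z h
  have hcent : ∀ a b : G, μ a b ∈ Subgroup.center G := fun a b => hZcentral (hμZ a b)
  have hmem : ∀ a b : G, μ a b ∈ K := fun a b => hZK (hμZ a b)
  simp only [hstar]
  rw [modified_mul_assoc_left K hcent hmem hμK, modified_mul_assoc_right K hmem hμK,
    hC1 x y z h, hC2 x y z h, ← Subgroup.mem_center_iff.mp (hcent y z)]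
  simp only [mul_assoc]

/-- In the modification setup, under (C1) and (C2), N is contained in the nucleus
of the loop (G,*). -/
theorem stmt_5 {G : Type*} [Group G] (Z K N : Subgroup G)
    (hZK : Z ≤ K) (hKN : K ≤ N)
    (hNnormal : N.Normal)
    (hNab : ∀ a ∈ N, ∀ b ∈ N, a * b = b * a)
    (hGN : ∀ x y : G, x⁻¹ * y⁻¹ * x * y ∈ N)
    (hZcentral : Z ≤ Subgroup.center G)
    (hKnormal : K.Normal)
    (hNK : ∀ n ∈ N, ∀ g : G, n⁻¹ * g⁻¹ * n * g ∈ K)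
    (μ : G → G → G)
    (hμZ : ∀ x y : G, μ x y ∈ Z)
    (hμK : ∀ x x' y y' : G, x⁻¹ * x' ∈ K → y⁻¹ * y' ∈ K → μ x y = μ x' y')
    (hμ1 : ∀ x : G, μ x 1 = 1) (hμ1' : ∀ x : G, μ 1 x = 1)
    (star : G → G → G) (hstar : ∀ x y : G, star x y = x * y * μ x y)
    (hC1 : ∀ x y z : G, (x ∈ N ∨ y ∈ N ∨ z ∈ N) → μ (x * y) z = μ x z * μ y z)
    (hC2 : ∀ x y z : G, (x ∈ N ∨ y ∈ N ∨ z ∈ N) → μ x (y * z) = μ x y * μ x z) :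
    ∀ x y z : G, (x ∈ N ∨ y ∈ N ∨ z ∈ N) →
      star (star x y) z = star x (star y z) :=
  stmt_5_general Z K N hZK hZcentral μ hμZ hμK star hstar hC1 hC2
end

section
/- In the modification setup, assume conditions (C1) and (C2). Then the middle inner mappings pairwise commute, T(x)∘T(y) = T(y)∘T(x) for all x, y ∈ G, if and only if condition (C3) holds; consequently (combined with the unconditional commuting of left and right inner mappings and their commuting with the T(x)), the inner mapping group of the loop (G,*) is abelian if and only if (C3) holds. -/
/-!
Each middle inner mapping is a conjugation followed by a central twist,
`T(y) w = w^y · s(y, w)` with `s(y, w) = δ(w, y) · μ(y, [w, y])⁻¹` by (C2), and `T(x)` commutes with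
multiplication by central elements of `K`, because μ only sees cosets of `K`. Expanding μ along the
commutators `[w, y], [w, x] ∈ N` by (C1), (C2), using `[w, yx] ≡ [w, x] [w, y] (mod K)`, gives
`T(x) (T(y) w) = w^{yx} · δ([w, y], x) · s(x, w) · s(y, w)`.
The last two factors are central, so symmetric in `x` and `y`; hence `T(x) ∘ T(y) = T(y) ∘ T(x)`
for all `x, y` is exactly (C3).
-/

open Subgroup
open scoped IsMulCommutative

namespace ModifiedGroup

variable {G : Type*} [Group G]

def middleInner (μ : G → G → G) (x w : G) : G :=
  x⁻¹ * w * x * μ w x * (μ x (x⁻¹ * w * x))⁻¹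

def middleTwist (μ : G → G → G) (x w : G) : G :=
  μ w x * (μ x w)⁻¹ * (μ x (w⁻¹ * x⁻¹ * w * x))⁻¹

variable {μ : G → G → G}

theorem conj_eq_mul_commutator (w y : G) : y⁻¹ * w * y = w * (w⁻¹ * y⁻¹ * w * y) := by
  group

theorem apply_conj_left {N : Subgroup G} (hN : ∀ a b : G, a⁻¹ * b⁻¹ * a * b ∈ N)
    (hmul : ∀ a n b, n ∈ N → μ (a * n) b = μ a b * μ n b) (w x y : G) :
    μ (y⁻¹ * w * y) x = μ w x * μ (w⁻¹ * y⁻¹ * w * y) x := by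
  rw [conj_eq_mul_commutator, hmul _ _ _ (hN w y)]

theorem apply_conj_right {N : Subgroup G} (hN : ∀ a b : G, a⁻¹ * b⁻¹ * a * b ∈ N)
    (hmul : ∀ a b n, n ∈ N → μ a (b * n) = μ a b * μ a n) (w x y : G) :
    μ x (y⁻¹ * w * y) = μ x w * μ x (w⁻¹ * y⁻¹ * w * y) := by
  rw [conj_eq_mul_commutator, hmul _ _ _ (hN w y)]

theorem apply_commutator_mul_right {K N : Subgroup G} (hN : ∀ a b : G, a⁻¹ * b⁻¹ * a * b ∈ N)
    (hNK : ∀ n ∈ N, ∀ g : G, n⁻¹ * g⁻¹ * n * g ∈ K)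
    (hK : ∀ a a' b b', a⁻¹ * a' ∈ K → b⁻¹ * b' ∈ K → μ a b = μ a' b')
    (hmul : ∀ a b n, n ∈ N → μ a (b * n) = μ a b * μ a n) (w x y : G) :
    μ x (w⁻¹ * (y * x)⁻¹ * w * (y * x)) =
      μ x (w⁻¹ * x⁻¹ * w * x) * μ x (w⁻¹ * y⁻¹ * w * y) := by
  -- `[w, yx] = [w, x] · [w, y]^x`, and `[w, y]^x ≡ [w, y]` modulo `K` since `[w, y] ∈ N`
  have hmod : (w⁻¹ * (y * x)⁻¹ * w * (y * x))⁻¹ *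
      ((w⁻¹ * x⁻¹ * w * x) * (w⁻¹ * y⁻¹ * w * y)) ∈ K := by
    have := K.inv_mem (hNK _ (hN w y) x)
    convert this using 1
    group
  rw [hK x x _ _ (by simp) hmod, hmul _ _ _ (hN w y)]

theorem middleTwist_mem {H : Subgroup G} (hH : ∀ a b, μ a b ∈ H) (x w : G) :
    middleTwist μ x w ∈ H :=
  H.mul_mem (H.mul_mem (hH w x) (H.inv_mem (hH x w))) (H.inv_mem (hH _ _))

theorem middleInner_eq_conj_mul_middleTwist {N : Subgroup G}
    (hN : ∀ a b : G, a⁻¹ * b⁻¹ * a * b ∈ N)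
    (hmul : ∀ a b n, n ∈ N → μ a (b * n) = μ a b * μ a n)
    (hcent : ∀ a b, μ a b ∈ center G) (x w : G) :
    middleInner μ x w = x⁻¹ * w * x * middleTwist μ x w := by
  have hcomm : Commute (μ x w) (μ x (w⁻¹ * x⁻¹ * w * x)) := mem_center_iff.mp (hcent _ _) _
  rw [middleInner, middleTwist, apply_conj_right hN hmul, hcomm.mul_inv]
  simp only [mul_assoc]

theorem middleInner_mul_of_mem_center {K : Subgroup G}
    (hK : ∀ a a' b b', a⁻¹ * a' ∈ K → b⁻¹ * b' ∈ K → μ a b = μ a' b')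
    {c : G} (hc : c ∈ center G) (hcK : c ∈ K) (x v : G) :
    middleInner μ x (v * c) = middleInner μ x v * c := by
  have hcomm := mem_center_iff.mp hc
  have hconj : x⁻¹ * (v * c) * x = x⁻¹ * v * x * c := by
    simp only [mul_assoc, hcomm x]
  have hmodK (a : G) : a⁻¹ * (a * c) ∈ K := by rwa [inv_mul_cancel_left]
  rw [middleInner, middleInner, hconj, ← hK v (v * c) x x (hmodK v) (by simp),
    ← hK x x (x⁻¹ * v * x) (x⁻¹ * v * x * c) (by simp) (hmodK _)]
  simp only [mul_assoc, ← hcomm]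

theorem middleInner_conj {K N : Subgroup G} (hN : ∀ a b : G, a⁻¹ * b⁻¹ * a * b ∈ N)
    (hNK : ∀ n ∈ N, ∀ g : G, n⁻¹ * g⁻¹ * n * g ∈ K)
    (hK : ∀ a a' b b', a⁻¹ * a' ∈ K → b⁻¹ * b' ∈ K → μ a b = μ a' b')
    (hmul_left : ∀ a n b, n ∈ N → μ (a * n) b = μ a b * μ n b)
    (hmul_right : ∀ a b n, n ∈ N → μ a (b * n) = μ a b * μ a n)
    (hcent : ∀ a b, μ a b ∈ center G) (x y w : G) :
    middleInner μ x (y⁻¹ * w * y) = (y * x)⁻¹ * w * (y * x) *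
      (μ (w⁻¹ * y⁻¹ * w * y) x * (μ x (w⁻¹ * y⁻¹ * w * y))⁻¹ * middleTwist μ x w) := by
  have hconj : x⁻¹ * (y⁻¹ * w * y) * x = (y * x)⁻¹ * w * (y * x) := by group
  rw [middleInner, middleTwist, hconj, apply_conj_left hN hmul_left, apply_conj_right hN hmul_right,
    apply_commutator_mul_right hN hNK hK hmul_right, mul_assoc _ (μ w x * _)]
  congr 1
  lift μ to G → G → center G using hcent
  beta_reduce
  norm_cast
  simp only [mul_inv]
  ac_rfl

theorem middleInner_middleInner {K N : Subgroup G} (hN : ∀ a b : G, a⁻¹ * b⁻¹ * a * b ∈ N)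
    (hNK : ∀ n ∈ N, ∀ g : G, n⁻¹ * g⁻¹ * n * g ∈ K)
    (hK : ∀ a a' b b', a⁻¹ * a' ∈ K → b⁻¹ * b' ∈ K → μ a b = μ a' b')
    (hmul_left : ∀ a n b, n ∈ N → μ (a * n) b = μ a b * μ n b)
    (hmul_right : ∀ a b n, n ∈ N → μ a (b * n) = μ a b * μ a n)
    (hcent : ∀ a b, μ a b ∈ center G) (hμK : ∀ a b, μ a b ∈ K) (x y w : G) :
    middleInner μ x (middleInner μ y w) = (y * x)⁻¹ * w * (y * x) *
      (μ (w⁻¹ * y⁻¹ * w * y) x * (μ x (w⁻¹ * y⁻¹ * w * y))⁻¹) *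
      (middleTwist μ x w * middleTwist μ y w) := by
  rw [middleInner_eq_conj_mul_middleTwist hN hmul_right hcent y w,
    middleInner_mul_of_mem_center hK (middleTwist_mem hcent y w) (middleTwist_mem hμK y w),
    middleInner_conj hN hNK hK hmul_left hmul_right hcent]
  simp only [mul_assoc]

theorem middleInner_comm_iff {K N : Subgroup G} (hN : ∀ a b : G, a⁻¹ * b⁻¹ * a * b ∈ N)
    (hNK : ∀ n ∈ N, ∀ g : G, n⁻¹ * g⁻¹ * n * g ∈ K)
    (hK : ∀ a a' b b', a⁻¹ * a' ∈ K → b⁻¹ * b' ∈ K → μ a b = μ a' b')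
    (hmul_left : ∀ a n b, n ∈ N → μ (a * n) b = μ a b * μ n b)
    (hmul_right : ∀ a b n, n ∈ N → μ a (b * n) = μ a b * μ a n)
    (hcent : ∀ a b, μ a b ∈ center G) (hμK : ∀ a b, μ a b ∈ K) :
    (∀ x y : G, middleInner μ x ∘ middleInner μ y = middleInner μ y ∘ middleInner μ x) ↔
      ∀ x y z : G,
        (y * x)⁻¹ * z * (y * x) * (μ (z⁻¹ * y⁻¹ * z * y) x * (μ x (z⁻¹ * y⁻¹ * z * y))⁻¹) =
        (x * y)⁻¹ * z * (x * y) * (μ (z⁻¹ * x⁻¹ * z * x) y * (μ y (z⁻¹ * x⁻¹ * z * x))⁻¹) := by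
  have key := middleInner_middleInner hN hNK hK hmul_left hmul_right hcent hμK
  have hsymm (x y w : G) : middleTwist μ y w * middleTwist μ x w =
      middleTwist μ x w * middleTwist μ y w :=
    mem_center_iff.mp (middleTwist_mem hcent x w) _
  refine ⟨fun h x y z => ?_, fun h x y => funext fun w => ?_⟩
  · have hz := congrFun (h x y) z
    rw [Function.comp_apply, Function.comp_apply, key, key, hsymm] at hz
    exact mul_right_cancel hz
  · rw [Function.comp_apply, Function.comp_apply, key, key, hsymm, h]

end ModifiedGroup

theorem stmt_7_general {G : Type*} [Group G] (Z K N : Subgroup G)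
    (hZK : Z ≤ K)
    (hGN : ∀ x y : G, x⁻¹ * y⁻¹ * x * y ∈ N)
    (hZcentral : Z ≤ Subgroup.center G)
    (hNK : ∀ n ∈ N, ∀ g : G, n⁻¹ * g⁻¹ * n * g ∈ K)
    (μ : G → G → G)
    (hμZ : ∀ x y : G, μ x y ∈ Z)
    (hμK : ∀ x x' y y' : G, x⁻¹ * x' ∈ K → y⁻¹ * y' ∈ K → μ x y = μ x' y')
    (δ : G → G → G) (hδ : ∀ x y : G, δ x y = μ x y * (μ y x)⁻¹)
    (T : G → G → G)
    (hT : ∀ x w : G, T x w = (x⁻¹ * w * x) * μ w x * (μ x (x⁻¹ * w * x))⁻¹)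
    (hC1 : ∀ x y z : G, (x ∈ N ∨ y ∈ N ∨ z ∈ N) → μ (x * y) z = μ x z * μ y z)
    (hC2 : ∀ x y z : G, (x ∈ N ∨ y ∈ N ∨ z ∈ N) → μ x (y * z) = μ x y * μ x z) :
    (∀ x y : G, T x ∘ T y = T y ∘ T x) ↔
    (∀ x y z : G,
      (y * x)⁻¹ * z * (y * x) * δ (z⁻¹ * y⁻¹ * z * y) x =
      (x * y)⁻¹ * z * (x * y) * δ (z⁻¹ * x⁻¹ * z * x) y) := by
  obtain rfl : T = ModifiedGroup.middleInner μ := funext fun x => funext (hT x)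
  obtain rfl : δ = fun a b => μ a b * (μ b a)⁻¹ := funext fun a => funext (hδ a)
  exact ModifiedGroup.middleInner_comm_iff hGN hNK hμK
    (fun a n b hn => hC1 a n b (Or.inr (Or.inl hn)))
    (fun a b n hn => hC2 a b n (Or.inr (Or.inr hn)))
    (fun a b => hZcentral (hμZ a b)) (fun a b => hZK (hμZ a b))

/-- In the modification setup, under (C1) and (C2), the middle inner mappings pairwise
commute if and only if condition (C3) holds. -/
theorem stmt_7 {G : Type*} [Group G] (Z K N : Subgroup G)
    (hZK : Z ≤ K) (hKN : K ≤ N)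
    (hNnormal : N.Normal)
    (hNab : ∀ a ∈ N, ∀ b ∈ N, a * b = b * a)
    (hGN : ∀ x y : G, x⁻¹ * y⁻¹ * x * y ∈ N)
    (hZcentral : Z ≤ Subgroup.center G)
    (hKnormal : K.Normal)
    (hNK : ∀ n ∈ N, ∀ g : G, n⁻¹ * g⁻¹ * n * g ∈ K)
    (μ : G → G → G)
    (hμZ : ∀ x y : G, μ x y ∈ Z)
    (hμK : ∀ x x' y y' : G, x⁻¹ * x' ∈ K → y⁻¹ * y' ∈ K → μ x y = μ x' y')
    (hμ1 : ∀ x : G, μ x 1 = 1) (hμ1' : ∀ x : G, μ 1 x = 1)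
    (star : G → G → G) (hstar : ∀ x y : G, star x y = x * y * μ x y)
    (δ : G → G → G) (hδ : ∀ x y : G, δ x y = μ x y * (μ y x)⁻¹)
    (T : G → G → G)
    (hT : ∀ x w : G, T x w = (x⁻¹ * w * x) * μ w x * (μ x (x⁻¹ * w * x))⁻¹)
    (hC1 : ∀ x y z : G, (x ∈ N ∨ y ∈ N ∨ z ∈ N) → μ (x * y) z = μ x z * μ y z)
    (hC2 : ∀ x y z : G, (x ∈ N ∨ y ∈ N ∨ z ∈ N) → μ x (y * z) = μ x y * μ x z) :
    (∀ x y : G, T x ∘ T y = T y ∘ T x) ↔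
    (∀ x y z : G,
      (y * x)⁻¹ * z * (y * x) * δ (z⁻¹ * y⁻¹ * z * y) x =
      (x * y)⁻¹ * z * (x * y) * δ (z⁻¹ * x⁻¹ * z * x) y) :=
  stmt_7_general Z K N hZK hGN hZcentral hNK μ hμZ hμK δ hδ T hT hC1 hC2
end

section
/- In the modification setup, assume condition (C3). Then for all x, y, z ∈ G one has [z,[y⁻¹,x⁻¹]] = δ([z,x],y)·δ([z,y],x)⁻¹ = (z^{xy})⁻¹·z^{yx}; in particular the double commutator [z,[y⁻¹,x⁻¹]] lies in Z and hence in the center of G. -/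
/-! Condition (C3) says exactly that `z^{yx}` and `z^{xy}` differ by the element
`δ([z,x],y)·δ([z,y],x)⁻¹` of `Z`. In any group the double commutator `[z,[y⁻¹,x⁻¹]]` is the
conjugate of `(z^{xy})⁻¹·z^{yx}` by `xy`, and this conjugation is trivial once that element
is central. -/

theorem double_commutator_eq_conj {G : Type*} [Group G] (x y z : G) :
    z⁻¹ * (y * x * y⁻¹ * x⁻¹)⁻¹ * z * (y * x * y⁻¹ * x⁻¹) =
      (x * y) * (((x * y)⁻¹ * z * (x * y))⁻¹ * ((y * x)⁻¹ * z * (y * x))) * (x * y)⁻¹ := by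
  group

theorem double_commutator_eq_of_mem_center {G : Type*} [Group G] {x y z : G}
    (h : ((x * y)⁻¹ * z * (x * y))⁻¹ * ((y * x)⁻¹ * z * (y * x)) ∈ Subgroup.center G) :
    z⁻¹ * (y * x * y⁻¹ * x⁻¹)⁻¹ * z * (y * x * y⁻¹ * x⁻¹) =
      ((x * y)⁻¹ * z * (x * y))⁻¹ * ((y * x)⁻¹ * z * (y * x)) := by
  rw [double_commutator_eq_conj, Subgroup.mem_center_iff.mp h, mul_inv_cancel_right]

theorem stmt_8_general {G : Type*} [Group G] (Z : Subgroup G)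
    (hZcentral : Z ≤ Subgroup.center G)
    (μ : G → G → G)
    (hμZ : ∀ x y : G, μ x y ∈ Z)
    (δ : G → G → G) (hδ : ∀ x y : G, δ x y = μ x y * (μ y x)⁻¹)
    (hC3 : ∀ x y z : G,
      (y * x)⁻¹ * z * (y * x) * δ (z⁻¹ * y⁻¹ * z * y) x =
      (x * y)⁻¹ * z * (x * y) * δ (z⁻¹ * x⁻¹ * z * x) y) :
    ∀ x y z : G,
      z⁻¹ * (y⁻¹⁻¹ * x⁻¹⁻¹ * y⁻¹ * x⁻¹)⁻¹ * z * (y⁻¹⁻¹ * x⁻¹⁻¹ * y⁻¹ * x⁻¹) =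
        δ (z⁻¹ * x⁻¹ * z * x) y * (δ (z⁻¹ * y⁻¹ * z * y) x)⁻¹ ∧
      z⁻¹ * (y⁻¹⁻¹ * x⁻¹⁻¹ * y⁻¹ * x⁻¹)⁻¹ * z * (y⁻¹⁻¹ * x⁻¹⁻¹ * y⁻¹ * x⁻¹) =
        ((x * y)⁻¹ * z * (x * y))⁻¹ * ((y * x)⁻¹ * z * (y * x)) ∧
      z⁻¹ * (y⁻¹⁻¹ * x⁻¹⁻¹ * y⁻¹ * x⁻¹)⁻¹ * z * (y⁻¹⁻¹ * x⁻¹⁻¹ * y⁻¹ * x⁻¹) ∈ Z ∧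
      z⁻¹ * (y⁻¹⁻¹ * x⁻¹⁻¹ * y⁻¹ * x⁻¹)⁻¹ * z * (y⁻¹⁻¹ * x⁻¹⁻¹ * y⁻¹ * x⁻¹) ∈
        Subgroup.center G := by
  intro x y z
  have hδZ (u v : G) : δ u v ∈ Z := hδ u v ▸ mul_mem (hμZ u v) (inv_mem (hμZ v u))
  have hconj_quot : ((x * y)⁻¹ * z * (x * y))⁻¹ * ((y * x)⁻¹ * z * (y * x)) =
      δ (z⁻¹ * x⁻¹ * z * x) y * (δ (z⁻¹ * y⁻¹ * z * y) x)⁻¹ := by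
    rw [inv_mul_eq_iff_eq_mul, ← mul_assoc _ (δ _ _), eq_mul_inv_iff_mul_eq, hC3]
  have hquotZ := hconj_quot ▸ mul_mem (hδZ _ _) (inv_mem (hδZ _ _))
  have hcomm := double_commutator_eq_of_mem_center (hZcentral hquotZ)
  simp only [inv_inv]
  exact ⟨hcomm.trans hconj_quot, hcomm, hcomm ▸ hquotZ, hcomm ▸ hZcentral hquotZ⟩

/-- In the modification setup, under (C3), the double commutator [z,[y⁻¹,x⁻¹]]
equals δ([z,x],y)·δ([z,y],x)⁻¹ = (z^{xy})⁻¹·z^{yx} and lies in Z, hence in Z(G). -/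
theorem stmt_8 {G : Type*} [Group G] (Z K N : Subgroup G)
    (hZK : Z ≤ K) (hKN : K ≤ N)
    (hNnormal : N.Normal)
    (hNab : ∀ a ∈ N, ∀ b ∈ N, a * b = b * a)
    (hGN : ∀ x y : G, x⁻¹ * y⁻¹ * x * y ∈ N)
    (hZcentral : Z ≤ Subgroup.center G)
    (hKnormal : K.Normal)
    (hNK : ∀ n ∈ N, ∀ g : G, n⁻¹ * g⁻¹ * n * g ∈ K)
    (μ : G → G → G)
    (hμZ : ∀ x y : G, μ x y ∈ Z)
    (hμK : ∀ x x' y y' : G, x⁻¹ * x' ∈ K → y⁻¹ * y' ∈ K → μ x y = μ x' y')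
    (hμ1 : ∀ x : G, μ x 1 = 1) (hμ1' : ∀ x : G, μ 1 x = 1)
    (δ : G → G → G) (hδ : ∀ x y : G, δ x y = μ x y * (μ y x)⁻¹)
    (hC3 : ∀ x y z : G,
      (y * x)⁻¹ * z * (y * x) * δ (z⁻¹ * y⁻¹ * z * y) x =
      (x * y)⁻¹ * z * (x * y) * δ (z⁻¹ * x⁻¹ * z * x) y) :
    ∀ x y z : G,
      z⁻¹ * (y⁻¹⁻¹ * x⁻¹⁻¹ * y⁻¹ * x⁻¹)⁻¹ * z * (y⁻¹⁻¹ * x⁻¹⁻¹ * y⁻¹ * x⁻¹) =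
        δ (z⁻¹ * x⁻¹ * z * x) y * (δ (z⁻¹ * y⁻¹ * z * y) x)⁻¹ ∧
      z⁻¹ * (y⁻¹⁻¹ * x⁻¹⁻¹ * y⁻¹ * x⁻¹)⁻¹ * z * (y⁻¹⁻¹ * x⁻¹⁻¹ * y⁻¹ * x⁻¹) =
        ((x * y)⁻¹ * z * (x * y))⁻¹ * ((y * x)⁻¹ * z * (y * x)) ∧
      z⁻¹ * (y⁻¹⁻¹ * x⁻¹⁻¹ * y⁻¹ * x⁻¹)⁻¹ * z * (y⁻¹⁻¹ * x⁻¹⁻¹ * y⁻¹ * x⁻¹) ∈ Z ∧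
      z⁻¹ * (y⁻¹⁻¹ * x⁻¹⁻¹ * y⁻¹ * x⁻¹)⁻¹ * z * (y⁻¹⁻¹ * x⁻¹⁻¹ * y⁻¹ * x⁻¹) ∈
        Subgroup.center G :=
  stmt_8_general Z hZcentral μ hμZ δ hδ hC3
end

section
/- In the modification setup, assume condition (C3). Then the group G is nilpotent of nilpotency class at most three; that is, the fourth term of the lower central series of G is trivial: [[[G,G],G],G] = 1. -/
/-!
Since δ takes values in the central subgroup Z, condition (C3) says that conjugating by `x * y`
and by `y * x` agree modulo the centre. Conjugating the defect by `x * y` turns it into the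
double commutator `⁅⁅x, y⁆, z⁻¹⁆`, so every double commutator is central: commutators lie in
the second term of the upper central series, and the third term is all of `G`.
-/

open scoped commutatorElement

theorem inv_mul_mem_of_mul_eq_mul {G : Type*} [Group G] {H : Subgroup G} {a b d₁ d₂ : G}
    (hd₁ : d₁ ∈ H) (hd₂ : d₂ ∈ H) (h : a * d₁ = b * d₂) : a⁻¹ * b ∈ H := by
  have hb : b = a * d₁ * d₂⁻¹ := eq_mul_inv_of_mul_eq h.symm
  rw [hb, mul_assoc, inv_mul_cancel_left]
  exact mul_mem hd₁ (inv_mem hd₂)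

theorem commutatorElement_commutatorElement_mem_of_conj_inv_mul_mem {G : Type*} [Group G]
    {H : Subgroup G} [H.Normal]
    (h : ∀ x y z : G, ((y * x)⁻¹ * z * (y * x))⁻¹ * ((x * y)⁻¹ * z * (x * y)) ∈ H)
    (a b g : G) : ⁅⁅a, b⁆, g⁆ ∈ H := by
  have hconj : ⁅⁅a, b⁆, g⁆ =
      (a * b) * (((b * a)⁻¹ * g⁻¹ * (b * a))⁻¹ * ((a * b)⁻¹ * g⁻¹ * (a * b))) * (a * b)⁻¹ := by
    simp only [commutatorElement_def]
    group
  rw [hconj]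
  exact ‹H.Normal›.conj_mem _ (h a b g⁻¹) _

theorem upperCentralSeries_three_eq_top_of_commutatorElement_commutatorElement_mem_center
    {G : Type*} [Group G] (h : ∀ a b g : G, ⁅⁅a, b⁆, g⁆ ∈ Subgroup.center G) :
    Subgroup.upperCentralSeries G 3 = ⊤ := by
  refine eq_top_iff.mpr fun a _ => Subgroup.mem_upperCentralSeries_succ_iff.mpr fun b => ?_
  refine Subgroup.mem_upperCentralSeries_succ_iff.mpr fun g => ?_
  rw [Subgroup.upperCentralSeries_one]
  exact h a b g

theorem stmt_9_general {G : Type*} [Group G] (Z : Subgroup G)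
    (hZcentral : Z ≤ Subgroup.center G)
    (μ : G → G → G)
    (hμZ : ∀ x y : G, μ x y ∈ Z)
    (δ : G → G → G) (hδ : ∀ x y : G, δ x y = μ x y * (μ y x)⁻¹)
    (hC3 : ∀ x y z : G,
      (y * x)⁻¹ * z * (y * x) * δ (z⁻¹ * y⁻¹ * z * y) x =
      (x * y)⁻¹ * z * (x * y) * δ (z⁻¹ * x⁻¹ * z * x) y) :
    (⊤ : Subgroup G).lowerCentralSeries 3 = ⊥ := by
  have hδZ : ∀ x y : G, δ x y ∈ Z := fun x y => hδ x y ▸ mul_mem (hμZ x y) (inv_mem (hμZ y x))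
  have hdefect : ∀ x y z : G,
      ((y * x)⁻¹ * z * (y * x))⁻¹ * ((x * y)⁻¹ * z * (x * y)) ∈ Subgroup.center G := fun x y z =>
    hZcentral (inv_mul_mem_of_mul_eq_mul (hδZ _ _) (hδZ _ _) (hC3 x y z))
  rw [Subgroup.lowerCentralSeries_eq_bot_iff_upperCentralSeries_eq_top]
  exact upperCentralSeries_three_eq_top_of_commutatorElement_commutatorElement_mem_center
    (commutatorElement_commutatorElement_mem_of_conj_inv_mul_mem hdefect)

/-- In the modification setup, under (C3), the group G is nilpotent of class at most
three: the fourth term of the lower central series of G is trivial. -/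
theorem stmt_9 {G : Type*} [Group G] (Z K N : Subgroup G)
    (hZK : Z ≤ K) (hKN : K ≤ N)
    (hNnormal : N.Normal)
    (hNab : ∀ a ∈ N, ∀ b ∈ N, a * b = b * a)
    (hGN : ∀ x y : G, x⁻¹ * y⁻¹ * x * y ∈ N)
    (hZcentral : Z ≤ Subgroup.center G)
    (hKnormal : K.Normal)
    (hNK : ∀ n ∈ N, ∀ g : G, n⁻¹ * g⁻¹ * n * g ∈ K)
    (μ : G → G → G)
    (hμZ : ∀ x y : G, μ x y ∈ Z)
    (hμK : ∀ x x' y y' : G, x⁻¹ * x' ∈ K → y⁻¹ * y' ∈ K → μ x y = μ x' y')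
    (hμ1 : ∀ x : G, μ x 1 = 1) (hμ1' : ∀ x : G, μ 1 x = 1)
    (δ : G → G → G) (hδ : ∀ x y : G, δ x y = μ x y * (μ y x)⁻¹)
    (hC3 : ∀ x y z : G,
      (y * x)⁻¹ * z * (y * x) * δ (z⁻¹ * y⁻¹ * z * y) x =
      (x * y)⁻¹ * z * (x * y) * δ (z⁻¹ * x⁻¹ * z * x) y) :
    (⊤ : Subgroup G).lowerCentralSeries 3 = ⊥ :=
  stmt_9_general Z hZcentral μ hμZ δ hδ hC3
end

section
/- In the modification setup, assume conditions (C1), (C2) and (C3). Then the following are equivalent: (a) z * [y,x] = [y,x] * z for all x, y, z ∈ G (equivalently, the commutator subgroup [G,G] is contained in the center of the loop (G,*), i.e., (G,*) has nilpotency class at most two); (b) δ([x,y],z)·δ([y,z],x)·δ([z,x],y) = 1 for all x, y, z ∈ G. -/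
/-!
Write `u = [y,x]`. Substituting `z ↦ (xy) z (xy)⁻¹` in (C3) turns it into the formula
`z^u = z · δ([z,x],y) · δ([y,z],x)`: the conjugating elements become `u` and `1`, and the
commutators in the δ-arguments move only inside their `K`-cosets, which δ does not see. On the
other hand `z * u = u * z` says exactly `z^u = z · δ(u,z)`. Hence (a) at `(x,y,z)` amounts to
`δ(u,z) = δ([z,x],y) · δ([y,z],x)`, and since `δ([x,y],z) = δ(u,z)⁻¹` this is (b) at `(x,y,z)`.
-/

section

variable {G : Type*} [Group G]

theorem mul_mul_eq_mul_mul_iff_conj_eq (x y m n : G) :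
    x * y * m = y * x * n ↔ y⁻¹ * x * y = x * (n * m⁻¹) := by
  rw [show y⁻¹ * x * y = y⁻¹ * (x * y * m) * m⁻¹ by group,
    show x * (n * m⁻¹) = y⁻¹ * (y * x * n) * m⁻¹ by group, mul_left_inj, mul_right_inj]

theorem inv_commutator_eq (a b : G) : (a⁻¹ * b⁻¹ * a * b)⁻¹ = b⁻¹ * a⁻¹ * b * a := by
  group

theorem map_inv_eq_inv_of_map_mul_inv {M : Type*} [Group M] {f : G → M} {a : G} (h1 : f 1 = 1)
    (hmul : f (a * a⁻¹) = f a * f a⁻¹) : f a⁻¹ = (f a)⁻¹ :=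
  eq_inv_of_mul_eq_one_right (by rw [← hmul, mul_inv_cancel, h1])

variable {K N : Subgroup G}

theorem inv_commutator_mul_commutator_mul_mem
    (hNab : ∀ a ∈ N, ∀ b ∈ N, a * b = b * a)
    (hNK : ∀ n ∈ N, ∀ g : G, n⁻¹ * g⁻¹ * n * g ∈ K)
    {z x k : G} (hzx : z⁻¹ * x⁻¹ * z * x ∈ N) (hk : k ∈ N) :
    (z⁻¹ * x⁻¹ * z * x)⁻¹ * ((z * k)⁻¹ * x⁻¹ * (z * k) * x) ∈ K := by
  have hcomm := hNab _ (N.inv_mem hk) _ hzx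
  have : (z⁻¹ * x⁻¹ * z * x)⁻¹ * ((z * k)⁻¹ * x⁻¹ * (z * k) * x) = k⁻¹ * x⁻¹ * k * x :=
    calc (z⁻¹ * x⁻¹ * z * x)⁻¹ * ((z * k)⁻¹ * x⁻¹ * (z * k) * x)
        = (z⁻¹ * x⁻¹ * z * x)⁻¹ * (k⁻¹ * (z⁻¹ * x⁻¹ * z * x)) * (x⁻¹ * k * x) := by group
      _ = k⁻¹ * x⁻¹ * k * x := by rw [hcomm]; group
  exact this ▸ hNK k hk x

theorem conj_commutator_eq_of_C3 {δ : G → G → G}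
    (hNab : ∀ a ∈ N, ∀ b ∈ N, a * b = b * a)
    (hGN : ∀ x y : G, x⁻¹ * y⁻¹ * x * y ∈ N)
    (hNK : ∀ n ∈ N, ∀ g : G, n⁻¹ * g⁻¹ * n * g ∈ K)
    (hδK : ∀ a a' b : G, a⁻¹ * a' ∈ K → δ a b = δ a' b)
    (hC3 : ∀ x y z : G,
      (y * x)⁻¹ * z * (y * x) * δ (z⁻¹ * y⁻¹ * z * y) x =
      (x * y)⁻¹ * z * (x * y) * δ (z⁻¹ * x⁻¹ * z * x) y)
    (x y z : G) :
    (y⁻¹ * x⁻¹ * y * x)⁻¹ * z * (y⁻¹ * x⁻¹ * y * x) =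
      z * (δ (z⁻¹ * x⁻¹ * z * x) y * (δ (z⁻¹ * y⁻¹ * z * y) x)⁻¹) := by
  obtain ⟨k, hk, hzk⟩ : ∃ k ∈ N, z * k = x * y * z * (x * y)⁻¹ :=
    ⟨z⁻¹ * (x * y) * z * (x * y)⁻¹, by simpa only [inv_inv] using hGN z (x * y)⁻¹, by group⟩
  have h := hC3 x y (z * k)
  rw [← hδK _ _ y (inv_commutator_mul_commutator_mul_mem hNab hNK (hGN z x) hk),
    ← hδK _ _ x (inv_commutator_mul_commutator_mul_mem hNab hNK (hGN z y) hk), hzk,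
    show (x * y)⁻¹ * (x * y * z * (x * y)⁻¹) * (x * y) = z by group,
    show (y * x)⁻¹ * (x * y * z * (x * y)⁻¹) * (y * x) =
      (y⁻¹ * x⁻¹ * y * x)⁻¹ * z * (y⁻¹ * x⁻¹ * y * x) by group] at h
  rw [← mul_assoc z, ← h, mul_inv_cancel_right]

end

theorem stmt_13_general {G : Type*} [Group G] (Z K N : Subgroup G)
    (hNab : ∀ a ∈ N, ∀ b ∈ N, a * b = b * a)
    (hGN : ∀ x y : G, x⁻¹ * y⁻¹ * x * y ∈ N)
    (hZcentral : Z ≤ Subgroup.center G)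
    (hNK : ∀ n ∈ N, ∀ g : G, n⁻¹ * g⁻¹ * n * g ∈ K)
    (μ : G → G → G)
    (hμZ : ∀ x y : G, μ x y ∈ Z)
    (hμK : ∀ x x' y y' : G, x⁻¹ * x' ∈ K → y⁻¹ * y' ∈ K → μ x y = μ x' y')
    (hμ1 : ∀ x : G, μ x 1 = 1) (hμ1' : ∀ x : G, μ 1 x = 1)
    (star : G → G → G) (hstar : ∀ x y : G, star x y = x * y * μ x y)
    (δ : G → G → G) (hδ : ∀ x y : G, δ x y = μ x y * (μ y x)⁻¹)
    (hC1 : ∀ x y z : G, (x ∈ N ∨ y ∈ N ∨ z ∈ N) → μ (x * y) z = μ x z * μ y z)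
    (hC2 : ∀ x y z : G, (x ∈ N ∨ y ∈ N ∨ z ∈ N) → μ x (y * z) = μ x y * μ x z)
    (hC3 : ∀ x y z : G,
      (y * x)⁻¹ * z * (y * x) * δ (z⁻¹ * y⁻¹ * z * y) x =
      (x * y)⁻¹ * z * (x * y) * δ (z⁻¹ * x⁻¹ * z * x) y) :
    (∀ x y z : G, star z (y⁻¹ * x⁻¹ * y * x) = star (y⁻¹ * x⁻¹ * y * x) z) ↔
    (∀ x y z : G,
      δ (x⁻¹ * y⁻¹ * x * y) z * δ (y⁻¹ * z⁻¹ * y * z) x *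
        δ (z⁻¹ * x⁻¹ * z * x) y = 1) := by
  have hμcomm (a b c d : G) : Commute (μ a b) (μ c d) :=
    Subgroup.mem_center_iff.mp (hZcentral (hμZ c d)) (μ a b)
  have hδcomm (a b c d : G) : Commute (δ a b) (δ c d) := by
    simp only [hδ]
    exact ((hμcomm _ _ _ _).mul_right (hμcomm _ _ _ _).inv_right).mul_left
      ((hμcomm _ _ _ _).mul_right (hμcomm _ _ _ _).inv_right).inv_left
  have hδK (a a' b : G) (h : a⁻¹ * a' ∈ K) : δ a b = δ a' b := by
    have hb : b⁻¹ * b ∈ K := by simp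
    rw [hδ, hδ, hμK a a' b b h hb, hμK b b a a' hb h]
  have hδinv (a b : G) (ha : a ∈ N) : δ a⁻¹ b = (δ a b)⁻¹ := by
    rw [hδ, hδ, map_inv_eq_inv_of_map_mul_inv (f := (μ · b)) (hμ1' b) (hC1 _ _ _ (.inl ha)),
      map_inv_eq_inv_of_map_mul_inv (f := μ b) (hμ1 b) (hC2 _ _ _ (.inr (.inl ha))),
      mul_inv_rev, inv_inv, (hμcomm _ _ _ _).inv_left.eq]
  refine forall₃_congr fun x y z => ?_
  rw [hstar, hstar, mul_mul_eq_mul_mul_iff_conj_eq, ← hδ,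
    conj_commutator_eq_of_C3 hNab hGN hNK hδK hC3, mul_right_inj,
    ← inv_commutator_eq y z, hδinv _ x (hGN y z), inv_inv,
    ← inv_commutator_eq y x, hδinv _ z (hGN y x), mul_assoc (δ _ _)⁻¹, inv_mul_eq_one,
    (hδcomm _ _ _ _).eq, eq_comm]

/-- In the modification setup, under (C1)-(C3): the loop (G,*) has nilpotency class
at most two iff δ([x,y],z)·δ([y,z],x)·δ([z,x],y) = 1 for all x, y, z. -/
theorem stmt_13 {G : Type*} [Group G] (Z K N : Subgroup G)
    (hZK : Z ≤ K) (hKN : K ≤ N)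
    (hNnormal : N.Normal)
    (hNab : ∀ a ∈ N, ∀ b ∈ N, a * b = b * a)
    (hGN : ∀ x y : G, x⁻¹ * y⁻¹ * x * y ∈ N)
    (hZcentral : Z ≤ Subgroup.center G)
    (hKnormal : K.Normal)
    (hNK : ∀ n ∈ N, ∀ g : G, n⁻¹ * g⁻¹ * n * g ∈ K)
    (μ : G → G → G)
    (hμZ : ∀ x y : G, μ x y ∈ Z)
    (hμK : ∀ x x' y y' : G, x⁻¹ * x' ∈ K → y⁻¹ * y' ∈ K → μ x y = μ x' y')
    (hμ1 : ∀ x : G, μ x 1 = 1) (hμ1' : ∀ x : G, μ 1 x = 1)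
    (star : G → G → G) (hstar : ∀ x y : G, star x y = x * y * μ x y)
    (δ : G → G → G) (hδ : ∀ x y : G, δ x y = μ x y * (μ y x)⁻¹)
    (hC1 : ∀ x y z : G, (x ∈ N ∨ y ∈ N ∨ z ∈ N) → μ (x * y) z = μ x z * μ y z)
    (hC2 : ∀ x y z : G, (x ∈ N ∨ y ∈ N ∨ z ∈ N) → μ x (y * z) = μ x y * μ x z)
    (hC3 : ∀ x y z : G,
      (y * x)⁻¹ * z * (y * x) * δ (z⁻¹ * y⁻¹ * z * y) x =
      (x * y)⁻¹ * z * (x * y) * δ (z⁻¹ * x⁻¹ * z * x) y) :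
    (∀ x y z : G, star z (y⁻¹ * x⁻¹ * y * x) = star (y⁻¹ * x⁻¹ * y * x) z) ↔
    (∀ x y z : G,
      δ (x⁻¹ * y⁻¹ * x * y) z * δ (y⁻¹ * z⁻¹ * y * z) x *
        δ (z⁻¹ * x⁻¹ * z * x) y = 1) :=
  stmt_13_general Z K N hNab hGN hZcentral hNK μ hμZ hμK hμ1 hμ1' star hstar δ hδ hC1 hC2 hC3
end

section
/- In the modification setup, assume conditions (C1), (C2) and (C3), and assume that G has nilpotency class at most two (i.e., [G,G] is contained in the center of G). Then δ([y,z],x)·δ([z,x],y) = 1 for all x, y, z ∈ G. -/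
/-!
In class two, `xy` and `yx` differ by a central commutator, so conjugation by `xy` and by `yx`
agree and (C3) collapses to `δ([z,y],x) = δ([z,x],y)`. Since `[y,z] = [z,y]⁻¹` lies in `N`,
(C1) and (C2) make `μ`, hence `δ`, inverse-preserving in that argument, which gives the claim.
-/

theorem conj_mul_eq_conj_mul_swap_of_mem_center {G : Type*} [Group G] {x y : G}
    (hxy : x⁻¹ * y⁻¹ * x * y ∈ Subgroup.center G) (z : G) :
    (x * y)⁻¹ * z * (x * y) = (y * x)⁻¹ * z * (y * x) := by
  set c := x⁻¹ * y⁻¹ * x * y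
  set w := (y * x)⁻¹ * z * (y * x)
  calc (x * y)⁻¹ * z * (x * y) = c⁻¹ * (w * c) := by simp only [c, w]; group
    _ = c⁻¹ * (c * w) := by rw [Subgroup.mem_center_iff.mp hxy w]
    _ = w := by group

namespace ModificationSetup

variable {G : Type*} [Group G] {N : Subgroup G} {μ : G → G → G}

theorem mu_inv_left
    (hC1 : ∀ x y z : G, (x ∈ N ∨ y ∈ N ∨ z ∈ N) → μ (x * y) z = μ x z * μ y z)
    (hμ1' : ∀ x : G, μ 1 x = 1) {a : G} (ha : a ∈ N) (b : G) :
    μ a⁻¹ b = (μ a b)⁻¹ := by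
  refine eq_inv_of_mul_eq_one_left ?_
  rw [← hC1 a⁻¹ a b (Or.inl (inv_mem ha)), inv_mul_cancel, hμ1']

theorem mu_inv_right
    (hC2 : ∀ x y z : G, (x ∈ N ∨ y ∈ N ∨ z ∈ N) → μ x (y * z) = μ x y * μ x z)
    (hμ1 : ∀ x : G, μ x 1 = 1) {a : G} (ha : a ∈ N) (b : G) :
    μ b a⁻¹ = (μ b a)⁻¹ := by
  refine eq_inv_of_mul_eq_one_left ?_
  rw [← hC2 b a⁻¹ a (Or.inr (Or.inl (inv_mem ha))), inv_mul_cancel, hμ1]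

theorem delta_inv_left {δ : G → G → G} (hδ : ∀ x y : G, δ x y = μ x y * (μ y x)⁻¹)
    (hμcenter : ∀ x y : G, μ x y ∈ Subgroup.center G)
    (hC1 : ∀ x y z : G, (x ∈ N ∨ y ∈ N ∨ z ∈ N) → μ (x * y) z = μ x z * μ y z)
    (hC2 : ∀ x y z : G, (x ∈ N ∨ y ∈ N ∨ z ∈ N) → μ x (y * z) = μ x y * μ x z)
    (hμ1 : ∀ x : G, μ x 1 = 1) (hμ1' : ∀ x : G, μ 1 x = 1) {a : G} (ha : a ∈ N) (b : G) :
    δ a⁻¹ b = (δ a b)⁻¹ := by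
  rw [hδ, hδ, mu_inv_left hC1 hμ1' ha, mu_inv_right hC2 hμ1 ha, inv_inv,
    mul_inv_rev, inv_inv, Subgroup.mem_center_iff.mp (hμcenter b a)]

end ModificationSetup

theorem stmt_14_general {G : Type*} [Group G] (Z N : Subgroup G)
    (hGN : ∀ x y : G, x⁻¹ * y⁻¹ * x * y ∈ N)
    (hZcentral : Z ≤ Subgroup.center G)
    (μ : G → G → G)
    (hμZ : ∀ x y : G, μ x y ∈ Z)
    (hμ1 : ∀ x : G, μ x 1 = 1) (hμ1' : ∀ x : G, μ 1 x = 1)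
    (δ : G → G → G) (hδ : ∀ x y : G, δ x y = μ x y * (μ y x)⁻¹)
    (hC1 : ∀ x y z : G, (x ∈ N ∨ y ∈ N ∨ z ∈ N) → μ (x * y) z = μ x z * μ y z)
    (hC2 : ∀ x y z : G, (x ∈ N ∨ y ∈ N ∨ z ∈ N) → μ x (y * z) = μ x y * μ x z)
    (hC3 : ∀ x y z : G,
      (y * x)⁻¹ * z * (y * x) * δ (z⁻¹ * y⁻¹ * z * y) x =
      (x * y)⁻¹ * z * (x * y) * δ (z⁻¹ * x⁻¹ * z * x) y)
    (hclass2 : ∀ x y : G, x⁻¹ * y⁻¹ * x * y ∈ Subgroup.center G) :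
    ∀ x y z : G,
      δ (y⁻¹ * z⁻¹ * y * z) x * δ (z⁻¹ * x⁻¹ * z * x) y = 1 := by
  intro x y z
  have hswap : δ (z⁻¹ * y⁻¹ * z * y) x = δ (z⁻¹ * x⁻¹ * z * x) y := by
    have h := hC3 x y z
    rw [conj_mul_eq_conj_mul_swap_of_mem_center (hclass2 x y)] at h
    exact mul_left_cancel h
  have hcomm_inv : y⁻¹ * z⁻¹ * y * z = (z⁻¹ * y⁻¹ * z * y)⁻¹ := by group
  have hinv := ModificationSetup.delta_inv_left hδ (fun a b ↦ hZcentral (hμZ a b)) hC1 hC2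
    hμ1 hμ1' (hGN z y) x
  rw [hcomm_inv, hinv, hswap, inv_mul_cancel]

/-- In the modification setup, under (C1)-(C3) and G of class at most two,
δ([y,z],x)·δ([z,x],y) = 1 for all x, y, z. -/
theorem stmt_14 {G : Type*} [Group G] (Z K N : Subgroup G)
    (hZK : Z ≤ K) (hKN : K ≤ N)
    (hNnormal : N.Normal)
    (hNab : ∀ a ∈ N, ∀ b ∈ N, a * b = b * a)
    (hGN : ∀ x y : G, x⁻¹ * y⁻¹ * x * y ∈ N)
    (hZcentral : Z ≤ Subgroup.center G)
    (hKnormal : K.Normal)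
    (hNK : ∀ n ∈ N, ∀ g : G, n⁻¹ * g⁻¹ * n * g ∈ K)
    (μ : G → G → G)
    (hμZ : ∀ x y : G, μ x y ∈ Z)
    (hμK : ∀ x x' y y' : G, x⁻¹ * x' ∈ K → y⁻¹ * y' ∈ K → μ x y = μ x' y')
    (hμ1 : ∀ x : G, μ x 1 = 1) (hμ1' : ∀ x : G, μ 1 x = 1)
    (δ : G → G → G) (hδ : ∀ x y : G, δ x y = μ x y * (μ y x)⁻¹)
    (hC1 : ∀ x y z : G, (x ∈ N ∨ y ∈ N ∨ z ∈ N) → μ (x * y) z = μ x z * μ y z)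
    (hC2 : ∀ x y z : G, (x ∈ N ∨ y ∈ N ∨ z ∈ N) → μ x (y * z) = μ x y * μ x z)
    (hC3 : ∀ x y z : G,
      (y * x)⁻¹ * z * (y * x) * δ (z⁻¹ * y⁻¹ * z * y) x =
      (x * y)⁻¹ * z * (x * y) * δ (z⁻¹ * x⁻¹ * z * x) y)
    (hclass2 : ∀ x y : G, x⁻¹ * y⁻¹ * x * y ∈ Subgroup.center G) :
    ∀ x y z : G,
      δ (y⁻¹ * z⁻¹ * y * z) x * δ (z⁻¹ * x⁻¹ * z * x) y = 1 :=
  stmt_14_general Z N hGN hZcentral μ hμZ hμ1 hμ1' δ hδ hC1 hC2 hC3 hclass2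
end

section
/- In the modification setup, assume conditions (C1), (C2) and (C3). Then the following two conditions are equivalent: (a) G has nilpotency class at most two and there exist x, y, z ∈ G with z * [y,x] ≠ [y,x] * z (so that the loop (G,*) is of nilpotency class three while G is of class two); (b) δ([x,y],z) = δ([x,z],y) for all x, y, z ∈ G, and δ([x,y],z) ≠ 1 for some x, y, z ∈ G. -/
/-!
Condition (C3) says `z^(yx) · δ([z,y],x) = z^(xy) · δ([z,x],y)`, so the symmetry
`δ([x,y],z) = δ([x,z],y)` holds for all `x, y, z` exactly when `z^(yx) = z^(xy)` always, i.e. when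
every commutator is central. Once a commutator `c` is central, `z ⋆ c = z c μ(z,c)` and
`c ⋆ z = z c μ(c,z)` in the loop, so `z` and `c` commute there exactly when `δ(c,z) = 1`.
-/

section

open scoped commutatorElement

variable {G : Type*} [Group G]

theorem commutatorElement_mem_center_iff (a b : G) :
    ⁅a, b⁆ ∈ Subgroup.center G ↔ ∀ z : G, (b * a)⁻¹ * z * (b * a) = (a * b)⁻¹ * z * (a * b) := by
  rw [Subgroup.mem_center_iff]
  refine forall_congr' fun z => ?_
  rw [commutatorElement_def]
  constructor
  · intro h
    calc (b * a)⁻¹ * z * (b * a)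
        = (a * b)⁻¹ * ((a * b * a⁻¹ * b⁻¹) * z) * (a * b * a⁻¹ * b⁻¹)⁻¹ * (a * b) := by group
      _ = (a * b)⁻¹ * z * (a * b) := by rw [← h]; group
  · intro h
    calc z * (a * b * a⁻¹ * b⁻¹)
        = a * b * ((a * b)⁻¹ * z * (a * b)) * (b * a)⁻¹ := by group
      _ = a * b * a⁻¹ * b⁻¹ * z := by rw [← h]; group

theorem commutator_mem_center_iff_conj_mul_comm :
    (∀ x y : G, x⁻¹ * y⁻¹ * x * y ∈ Subgroup.center G) ↔
      ∀ x y z : G, (y * x)⁻¹ * z * (y * x) = (x * y)⁻¹ * z * (x * y) := by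
  have hcomm : ∀ x y : G, x⁻¹ * y⁻¹ * x * y = (⁅x⁻¹, y⁻¹⁆ : G) := by
    simp [commutatorElement_def]
  simp only [hcomm, commutatorElement_mem_center_iff]
  constructor
  · intro h x y
    simpa using h x⁻¹ y⁻¹
  · intro h x y
    exact h x⁻¹ y⁻¹

theorem mul_eq_mul_iff_of_mem_center {c : G} (hc : c ∈ Subgroup.center G) (z m m' : G) :
    z * c * m = c * z * m' ↔ m = m' := by
  rw [(Subgroup.mem_center_iff.mp hc z).symm, mul_right_inj]

end

theorem stmt_15_general {G : Type*} [Group G]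
    (μ : G → G → G)
    (star : G → G → G) (hstar : ∀ x y : G, star x y = x * y * μ x y)
    (δ : G → G → G) (hδ : ∀ x y : G, δ x y = μ x y * (μ y x)⁻¹)
    (hC3 : ∀ x y z : G,
      (y * x)⁻¹ * z * (y * x) * δ (z⁻¹ * y⁻¹ * z * y) x =
      (x * y)⁻¹ * z * (x * y) * δ (z⁻¹ * x⁻¹ * z * x) y) :
    ((∀ x y : G, x⁻¹ * y⁻¹ * x * y ∈ Subgroup.center G) ∧
      (∃ x y z : G, star z (y⁻¹ * x⁻¹ * y * x) ≠ star (y⁻¹ * x⁻¹ * y * x) z)) ↔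
    ((∀ x y z : G, δ (x⁻¹ * y⁻¹ * x * y) z = δ (x⁻¹ * z⁻¹ * x * z) y) ∧
      (∃ x y z : G, δ (x⁻¹ * y⁻¹ * x * y) z ≠ 1)) := by
  have hclass : (∀ x y : G, x⁻¹ * y⁻¹ * x * y ∈ Subgroup.center G) ↔
      ∀ x y z : G, δ (x⁻¹ * y⁻¹ * x * y) z = δ (x⁻¹ * z⁻¹ * x * z) y := by
    rw [commutator_mem_center_iff_conj_mul_comm]
    constructor
    · intro h x y z
      have h3 := hC3 z y x
      rwa [h z y x, mul_right_inj] at h3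
    · intro h x y z
      have h3 := hC3 x y z
      rwa [h z y x, mul_left_inj] at h3
  rw [← hclass]
  refine and_congr_right fun hcen => ?_
  rw [exists_comm]
  refine exists₃_congr fun y x z => not_congr ?_
  rw [hstar, hstar, mul_eq_mul_iff_of_mem_center (hcen y x), hδ, mul_inv_eq_one, eq_comm]

/-- In the modification setup, under (C1)-(C3): Q is of nilpotency class three with
G of class two iff δ([x,y],z) = δ([x,z],y) for all x,y,z and δ([x,y],z) ≠ 1 for
some x,y,z. -/
theorem stmt_15 {G : Type*} [Group G] (Z K N : Subgroup G)
    (hZK : Z ≤ K) (hKN : K ≤ N)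
    (hNnormal : N.Normal)
    (hNab : ∀ a ∈ N, ∀ b ∈ N, a * b = b * a)
    (hGN : ∀ x y : G, x⁻¹ * y⁻¹ * x * y ∈ N)
    (hZcentral : Z ≤ Subgroup.center G)
    (hKnormal : K.Normal)
    (hNK : ∀ n ∈ N, ∀ g : G, n⁻¹ * g⁻¹ * n * g ∈ K)
    (μ : G → G → G)
    (hμZ : ∀ x y : G, μ x y ∈ Z)
    (hμK : ∀ x x' y y' : G, x⁻¹ * x' ∈ K → y⁻¹ * y' ∈ K → μ x y = μ x' y')
    (hμ1 : ∀ x : G, μ x 1 = 1) (hμ1' : ∀ x : G, μ 1 x = 1)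
    (star : G → G → G) (hstar : ∀ x y : G, star x y = x * y * μ x y)
    (δ : G → G → G) (hδ : ∀ x y : G, δ x y = μ x y * (μ y x)⁻¹)
    (hC1 : ∀ x y z : G, (x ∈ N ∨ y ∈ N ∨ z ∈ N) → μ (x * y) z = μ x z * μ y z)
    (hC2 : ∀ x y z : G, (x ∈ N ∨ y ∈ N ∨ z ∈ N) → μ x (y * z) = μ x y * μ x z)
    (hC3 : ∀ x y z : G,
      (y * x)⁻¹ * z * (y * x) * δ (z⁻¹ * y⁻¹ * z * y) x =
      (x * y)⁻¹ * z * (x * y) * δ (z⁻¹ * x⁻¹ * z * x) y) :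
    ((∀ x y : G, x⁻¹ * y⁻¹ * x * y ∈ Subgroup.center G) ∧
      (∃ x y z : G, star z (y⁻¹ * x⁻¹ * y * x) ≠ star (y⁻¹ * x⁻¹ * y * x) z)) ↔
    ((∀ x y z : G, δ (x⁻¹ * y⁻¹ * x * y) z = δ (x⁻¹ * z⁻¹ * x * z) y) ∧
      (∃ x y z : G, δ (x⁻¹ * y⁻¹ * x * y) z ≠ 1)) :=
  stmt_15_general μ star hstar δ hδ hC3
end

section
/- In the modification setup, assume conditions (C1), (C2) and (C3), and assume that G has nilpotency class at most two (i.e., [G,G] ≤ Z(G)). Then the map f : G³ → G defined by f(x,y,z) = δ([x,y],z) satisfies: (i) f is symmetric, i.e., f(x,y,z) is invariant under every permutation of its three arguments; (ii) f(x,y,z)² = 1 for all x, y, z; (iii) f is additive in each argument, e.g. f(x₁x₂,y,z) = f(x₁,y,z)·f(x₂,y,z) for all x₁, x₂, y, z; and (iv) f(x,y,z) depends only on the cosets xN, yN, zN, e.g. f(xn,y,z) = f(x,y,z) for every n ∈ N. Hence f induces a symmetric triadditive map (G/N)³ → Z whose values have order dividing two, and this induced map is nontrivial whenever δ([x₀,y₀],z₀)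 ≠ 1 for some x₀, y₀, z₀ ∈ G. -/
/-!
By (C1), (C2) and centrality of `μ`, `δ a` is a homomorphism in either argument once `a ∈ N`.
In class two `[x₁x₂, y] = [x₁, y][x₂, y]` and `[y, x] = [x, y]⁻¹`, so `f` is additive in
each variable and antisymmetric in its first two. Also `x * y` and `y * x` induce the same
conjugation, so (C3) says that `f` is symmetric in its last two arguments; a form that is
both is symmetric of exponent two. Finally `f n y z = δ([n, y], z)` is trivial for `n ∈ N`,
as `[N, G] ≤ K` and `μ` is trivial on `K`.
-/

open Subgroup

section

variable {G : Type*} [Group G]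

lemma mul_mul_inv_mul_eq_of_mem_center {q s : G} (hq : q ∈ center G) (hs : s ∈ center G)
    (p r : G) : p * q * (r * s)⁻¹ = p * r⁻¹ * (q * s⁻¹) := by
  calc p * q * (r * s)⁻¹ = p * (q * r⁻¹) * s⁻¹ := by
        rw [mul_inv_rev, ← mem_center_iff.mp (inv_mem hs) r⁻¹]; group
    _ = p * (r⁻¹ * q) * s⁻¹ := by rw [← mem_center_iff.mp hq r⁻¹]
    _ = p * r⁻¹ * (q * s⁻¹) := by group

lemma conj_mul_comm_eq_of_mem_center {x y : G} (h : x⁻¹ * y⁻¹ * x * y ∈ center G) (z : G) :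
    (y * x)⁻¹ * z * (y * x) = (x * y)⁻¹ * z * (x * y) := by
  calc (y * x)⁻¹ * z * (y * x) =
        (x⁻¹ * y⁻¹ * x * y)⁻¹ * (((y * x)⁻¹ * z * (y * x)) * (x⁻¹ * y⁻¹ * x * y)) := by
        rw [mem_center_iff.mp h, inv_mul_cancel_left]
    _ = (x * y)⁻¹ * z * (x * y) := by group

lemma commutator_mul_left_eq_of_mem_center {x₁ y : G} (h : x₁⁻¹ * y⁻¹ * x₁ * y ∈ center G)
    (x₂ : G) : (x₁ * x₂)⁻¹ * y⁻¹ * (x₁ * x₂) * y =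
      (x₁⁻¹ * y⁻¹ * x₁ * y) * (x₂⁻¹ * y⁻¹ * x₂ * y) := by
  calc (x₁ * x₂)⁻¹ * y⁻¹ * (x₁ * x₂) * y =
        x₂⁻¹ * ((x₁⁻¹ * y⁻¹ * x₁ * y) * x₂) * (x₂⁻¹ * y⁻¹ * x₂ * y) := by group
    _ = _ := by rw [← mem_center_iff.mp h, inv_mul_cancel_left]

def skewPart (μ : G → G → G) (x y : G) : G := μ x y * (μ y x)⁻¹

section skewPart

variable {μ : G → G → G} {N : Subgroup G}

lemma skewPart_mul_left (hcen : ∀ x y, μ x y ∈ center G)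
    (hC1 : ∀ x y z : G, (x ∈ N ∨ y ∈ N ∨ z ∈ N) → μ (x * y) z = μ x z * μ y z)
    (hC2 : ∀ x y z : G, (x ∈ N ∨ y ∈ N ∨ z ∈ N) → μ x (y * z) = μ x y * μ x z)
    {a : G} (ha : a ∈ N) (b g : G) :
    skewPart μ (a * b) g = skewPart μ a g * skewPart μ b g := by
  rw [skewPart, hC1 a b g (Or.inl ha), hC2 g a b (Or.inr (Or.inl ha))]
  exact mul_mul_inv_mul_eq_of_mem_center (hcen b g) (hcen g b) _ _

lemma skewPart_mul_right (hcen : ∀ x y, μ x y ∈ center G)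
    (hC1 : ∀ x y z : G, (x ∈ N ∨ y ∈ N ∨ z ∈ N) → μ (x * y) z = μ x z * μ y z)
    (hC2 : ∀ x y z : G, (x ∈ N ∨ y ∈ N ∨ z ∈ N) → μ x (y * z) = μ x y * μ x z)
    {a : G} (ha : a ∈ N) (g h : G) :
    skewPart μ a (g * h) = skewPart μ a g * skewPart μ a h := by
  rw [skewPart, hC2 a g h (Or.inl ha), hC1 g h a (Or.inr (Or.inr ha))]
  exact mul_mul_inv_mul_eq_of_mem_center (hcen a h) (hcen h a) _ _

lemma skewPart_eq_one_of_mem {K : Subgroup G}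
    (hμK : ∀ x x' y y' : G, x⁻¹ * x' ∈ K → y⁻¹ * y' ∈ K → μ x y = μ x' y')
    (hμ1 : ∀ x : G, μ x 1 = 1) (hμ1' : ∀ x : G, μ 1 x = 1) {k : G} (hk : k ∈ K) (x : G) :
    skewPart μ k x = 1 := by
  have hk' : k⁻¹ * 1 ∈ K := by simpa using hk
  have hx : x⁻¹ * x ∈ K := by simp
  rw [skewPart, hμK k 1 x x hk' hx, hμK x x k 1 hx hk', hμ1, hμ1', inv_one, mul_one]

end skewPart

def commForm (δ : G → G → G) (x y z : G) : G := δ (x⁻¹ * y⁻¹ * x * y) z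

section commForm

variable {δ : G → G → G} {N : Subgroup G}

lemma commForm_mul_left (hGN : ∀ x y : G, x⁻¹ * y⁻¹ * x * y ∈ N)
    (hclass2 : ∀ x y : G, x⁻¹ * y⁻¹ * x * y ∈ center G)
    (hδ : ∀ a ∈ N, ∀ b g : G, δ (a * b) g = δ a g * δ b g) (x₁ x₂ y z : G) :
    commForm δ (x₁ * x₂) y z = commForm δ x₁ y z * commForm δ x₂ y z := by
  rw [commForm, commutator_mul_left_eq_of_mem_center (hclass2 x₁ y), hδ _ (hGN x₁ y)]
  rfl

lemma commForm_mul_right (hGN : ∀ x y : G, x⁻¹ * y⁻¹ * x * y ∈ N)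
    (hδ : ∀ a ∈ N, ∀ g h : G, δ a (g * h) = δ a g * δ a h) (x y z₁ z₂ : G) :
    commForm δ x y (z₁ * z₂) = commForm δ x y z₁ * commForm δ x y z₂ :=
  hδ _ (hGN x y) z₁ z₂

lemma commForm_swap_left (hGN : ∀ x y : G, x⁻¹ * y⁻¹ * x * y ∈ N)
    (hδ : ∀ a ∈ N, ∀ b g : G, δ (a * b) g = δ a g * δ b g) (x y z : G) :
    commForm δ y x z = (commForm δ x y z)⁻¹ := by
  have hδ1 : δ 1 z = 1 := by simpa using (hδ 1 (one_mem N) 1 z).symm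
  have hinv : y⁻¹ * x⁻¹ * y * x = (x⁻¹ * y⁻¹ * x * y)⁻¹ := by group
  refine eq_inv_of_mul_eq_one_right ?_
  rw [commForm, commForm, hinv, ← hδ _ (hGN x y), mul_inv_cancel, hδ1]

lemma commForm_comm_right (hclass2 : ∀ x y : G, x⁻¹ * y⁻¹ * x * y ∈ center G)
    (hC3 : ∀ x y z : G,
      (y * x)⁻¹ * z * (y * x) * δ (z⁻¹ * y⁻¹ * z * y) x =
      (x * y)⁻¹ * z * (x * y) * δ (z⁻¹ * x⁻¹ * z * x) y) (x y z : G) :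
    commForm δ x y z = commForm δ x z y := by
  have h := hC3 z y x
  rwa [conj_mul_comm_eq_of_mem_center (hclass2 z y), mul_right_inj] at h

lemma commForm_eq_inv (hGN : ∀ x y : G, x⁻¹ * y⁻¹ * x * y ∈ N)
    (hδ : ∀ a ∈ N, ∀ b g : G, δ (a * b) g = δ a g * δ b g)
    (hswap : ∀ x y z : G, commForm δ x y z = commForm δ x z y) (x y z : G) :
    commForm δ x y z = (commForm δ x y z)⁻¹ := by
  have hyx := commForm_swap_left hGN hδ
  calc commForm δ x y z = (commForm δ y x z)⁻¹ := hyx y x z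
    _ = (commForm δ y z x)⁻¹ := by rw [hswap y]
    _ = commForm δ z y x := by rw [hyx z y x, inv_inv]
    _ = commForm δ z x y := hswap z y x
    _ = (commForm δ x z y)⁻¹ := hyx x z y
    _ = (commForm δ x y z)⁻¹ := by rw [← hswap]

lemma commForm_comm_left (hGN : ∀ x y : G, x⁻¹ * y⁻¹ * x * y ∈ N)
    (hδ : ∀ a ∈ N, ∀ b g : G, δ (a * b) g = δ a g * δ b g)
    (hswap : ∀ x y z : G, commForm δ x y z = commForm δ x z y) (x y z : G) :
    commForm δ x y z = commForm δ y x z := by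
  rw [commForm_swap_left hGN hδ, ← commForm_eq_inv hGN hδ hswap]

end commForm

end

theorem stmt_16_general {G : Type*} [Group G] (Z K N : Subgroup G)
    (hGN : ∀ x y : G, x⁻¹ * y⁻¹ * x * y ∈ N)
    (hZcentral : Z ≤ Subgroup.center G)
    (hNK : ∀ n ∈ N, ∀ g : G, n⁻¹ * g⁻¹ * n * g ∈ K)
    (μ : G → G → G)
    (hμZ : ∀ x y : G, μ x y ∈ Z)
    (hμK : ∀ x x' y y' : G, x⁻¹ * x' ∈ K → y⁻¹ * y' ∈ K → μ x y = μ x' y')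
    (hμ1 : ∀ x : G, μ x 1 = 1) (hμ1' : ∀ x : G, μ 1 x = 1)
    (δ : G → G → G) (hδ : ∀ x y : G, δ x y = μ x y * (μ y x)⁻¹)
    (hC1 : ∀ x y z : G, (x ∈ N ∨ y ∈ N ∨ z ∈ N) → μ (x * y) z = μ x z * μ y z)
    (hC2 : ∀ x y z : G, (x ∈ N ∨ y ∈ N ∨ z ∈ N) → μ x (y * z) = μ x y * μ x z)
    (hC3 : ∀ x y z : G,
      (y * x)⁻¹ * z * (y * x) * δ (z⁻¹ * y⁻¹ * z * y) x =
      (x * y)⁻¹ * z * (x * y) * δ (z⁻¹ * x⁻¹ * z * x) y)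
    (hclass2 : ∀ x y : G, x⁻¹ * y⁻¹ * x * y ∈ Subgroup.center G)
    (f : G → G → G → G)
    (hf : ∀ x y z : G, f x y z = δ (x⁻¹ * y⁻¹ * x * y) z) :
    (∀ x y z : G,
      f x y z = f x z y ∧ f x y z = f y x z ∧ f x y z = f y z x ∧
      f x y z = f z x y ∧ f x y z = f z y x) ∧
    (∀ x y z : G, f x y z * f x y z = 1) ∧
    (∀ x₁ x₂ y z : G, f (x₁ * x₂) y z = f x₁ y z * f x₂ y z) ∧
    (∀ x y₁ y₂ z : G, f x (y₁ * y₂) z = f x y₁ z * f x y₂ z) ∧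
    (∀ x y z₁ z₂ : G, f x y (z₁ * z₂) = f x y z₁ * f x y z₂) ∧
    (∀ x y z : G, ∀ n ∈ N,
      f (x * n) y z = f x y z ∧ f x (y * n) z = f x y z ∧ f x y (z * n) = f x y z) ∧
    (∀ x y z : G, f x y z ∈ Z) := by
  obtain rfl : δ = skewPart μ := funext fun x => funext (hδ x)
  obtain rfl : f = commForm (skewPart μ) := funext fun x => funext fun y => funext (hf x y)
  have hcen : ∀ x y, μ x y ∈ center G := fun x y => hZcentral (hμZ x y)
  have hmul_left := fun a (ha : a ∈ N) => skewPart_mul_left hcen hC1 hC2 ha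
  have hmul_right := fun a (ha : a ∈ N) => skewPart_mul_right hcen hC1 hC2 ha
  have hswap := commForm_comm_right hclass2 hC3
  have hcomm := commForm_comm_left hGN hmul_left hswap
  have hadd_left := commForm_mul_left hGN hclass2 hmul_left
  have hadd_right := commForm_mul_right hGN hmul_right
  have hvanish : ∀ n ∈ N, ∀ y z, commForm (skewPart μ) n y z = 1 := fun n hn y z =>
    skewPart_eq_one_of_mem hμK hμ1 hμ1' (hNK n hn y) z
  refine ⟨fun x y z => ⟨hswap x y z, hcomm x y z, (hcomm x y z).trans (hswap y x z),
      (hswap x y z).trans (hcomm x z y), ((hcomm x y z).trans (hswap y x z)).trans (hcomm y z x)⟩,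
    fun x y z => mul_eq_one_iff_eq_inv.mpr (commForm_eq_inv hGN hmul_left hswap x y z),
    hadd_left, fun x y₁ y₂ z => ?_, hadd_right, fun x y z n hn => ⟨?_, ?_, ?_⟩,
    fun x y z => Z.mul_mem (hμZ _ _) (Z.inv_mem (hμZ _ _))⟩
  · rw [hcomm x, hadd_left, hcomm y₁, hcomm y₂]
  · rw [hadd_left, hvanish n hn, mul_one]
  · rw [hcomm x, hadd_left, hvanish n hn, mul_one, hcomm y x z]
  · rw [hadd_right, hswap x y n, hcomm x n y, hvanish n hn, mul_one]

/-- In the modification setup, under (C1)-(C3) and G of class at most two, the map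
f(x,y,z) = δ([x,y],z) is symmetric, of exponent two, triadditive, depends only on
cosets modulo N, and takes values in Z. -/
theorem stmt_16 {G : Type*} [Group G] (Z K N : Subgroup G)
    (hZK : Z ≤ K) (hKN : K ≤ N)
    (hNnormal : N.Normal)
    (hNab : ∀ a ∈ N, ∀ b ∈ N, a * b = b * a)
    (hGN : ∀ x y : G, x⁻¹ * y⁻¹ * x * y ∈ N)
    (hZcentral : Z ≤ Subgroup.center G)
    (hKnormal : K.Normal)
    (hNK : ∀ n ∈ N, ∀ g : G, n⁻¹ * g⁻¹ * n * g ∈ K)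
    (μ : G → G → G)
    (hμZ : ∀ x y : G, μ x y ∈ Z)
    (hμK : ∀ x x' y y' : G, x⁻¹ * x' ∈ K → y⁻¹ * y' ∈ K → μ x y = μ x' y')
    (hμ1 : ∀ x : G, μ x 1 = 1) (hμ1' : ∀ x : G, μ 1 x = 1)
    (δ : G → G → G) (hδ : ∀ x y : G, δ x y = μ x y * (μ y x)⁻¹)
    (hC1 : ∀ x y z : G, (x ∈ N ∨ y ∈ N ∨ z ∈ N) → μ (x * y) z = μ x z * μ y z)
    (hC2 : ∀ x y z : G, (x ∈ N ∨ y ∈ N ∨ z ∈ N) → μ x (y * z) = μ x y * μ x z)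
    (hC3 : ∀ x y z : G,
      (y * x)⁻¹ * z * (y * x) * δ (z⁻¹ * y⁻¹ * z * y) x =
      (x * y)⁻¹ * z * (x * y) * δ (z⁻¹ * x⁻¹ * z * x) y)
    (hclass2 : ∀ x y : G, x⁻¹ * y⁻¹ * x * y ∈ Subgroup.center G)
    (f : G → G → G → G)
    (hf : ∀ x y z : G, f x y z = δ (x⁻¹ * y⁻¹ * x * y) z) :
    (∀ x y z : G,
      f x y z = f x z y ∧ f x y z = f y x z ∧ f x y z = f y z x ∧
      f x y z = f z x y ∧ f x y z = f z y x) ∧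
    (∀ x y z : G, f x y z * f x y z = 1) ∧
    (∀ x₁ x₂ y z : G, f (x₁ * x₂) y z = f x₁ y z * f x₂ y z) ∧
    (∀ x y₁ y₂ z : G, f x (y₁ * y₂) z = f x y₁ z * f x y₂ z) ∧
    (∀ x y z₁ z₂ : G, f x y (z₁ * z₂) = f x y z₁ * f x y z₂) ∧
    (∀ x y z : G, ∀ n ∈ N,
      f (x * n) y z = f x y z ∧ f x (y * n) z = f x y z ∧ f x y (z * n) = f x y z) ∧
    (∀ x y z : G, f x y z ∈ Z) :=
  stmt_16_general Z K N hGN hZcentral hNK μ hμZ hμK hμ1 hμ1' δ hδ hC1 hC2 hC3 hclass2 f hf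
end

section
/- Let K = (ℤ/2ℤ)³ and let V = (ℤ/2ℤ)² be the Klein four-group, written additively. For (c₁,c₂) ∈ V define φ_{(c₁,c₂)} : K → K by φ_{(c₁,c₂)}(a₀,a₁,a₂) = (a₀ + c₂a₁ + c₁a₂, a₁, a₂), and define γ : V → K by γ(c₁,c₂) = (c₁ + c₂ + c₁c₂, c₁, c₂). Then each φ_{(c₁,c₂)} is an automorphism of K, the map (c₁,c₂) ↦ φ_{(c₁,c₂)} is a group homomorphism from V to Aut(K) (i.e., φ_{c+d} = φ_c ∘ φ_d), and γ is a crosshomomorphism: γ(c+d) = γ(c) + φ_c(γ(d)) for all c, d ∈ V. -/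
/-!
The identities hold over any commutative ring `R`, not just `ℤ/2ℤ`: the shear
`φ_c(a₀, a₁, a₂) = (a₀ + c₂a₁ + c₁a₂, a₁, a₂)` is additive in `a` and satisfies
`φ_{c+d} = φ_c ∘ φ_d` and `φ_0 = id`, so `φ_{-c}` inverts `φ_c`. The crossed-homomorphism
identity for `γ` reduces to expanding `(c₁ + d₁)(c₂ + d₂)`, whose cross terms
`c₁d₂ + d₁c₂` are exactly what `φ_c` adds to the first coordinate of `γ d`.
-/

namespace Klein

variable {R : Type*} [CommRing R]

def shear (c : R × R) (a : R × R × R) : R × R × R :=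
  (a.1 + c.2 * a.2.1 + c.1 * a.2.2, a.2.1, a.2.2)

def twist (c : R × R) : R × R × R :=
  (c.1 + c.2 + c.1 * c.2, c.1, c.2)

theorem shear_map_add (c : R × R) (a b : R × R × R) :
    shear c (a + b) = shear c a + shear c b := by
  simp only [shear, Prod.fst_add, Prod.snd_add, Prod.mk_add_mk]
  congr 1
  ring

theorem shear_add (c d : R × R) : shear (c + d) = shear c ∘ shear d := by
  funext a
  simp only [shear, Function.comp_apply, Prod.fst_add, Prod.snd_add]
  congr 1
  ring

theorem shear_zero : shear (0 : R × R) = id := by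
  funext a
  simp [shear]

theorem shear_bijective (c : R × R) : Function.Bijective (shear c) := by
  have inv_left : Function.LeftInverse (shear (-c)) (shear c) := fun a => by
    rw [← Function.comp_apply (f := shear (-c)), ← shear_add, neg_add_cancel, shear_zero, id]
  have inv_right : Function.RightInverse (shear (-c)) (shear c) := fun a => by
    rw [← Function.comp_apply (f := shear c), ← shear_add, add_neg_cancel, shear_zero, id]
  exact ⟨inv_left.injective, inv_right.surjective⟩

theorem twist_add (c d : R × R) : twist (c + d) = twist c + shear c (twist d) := by
  simp only [twist, shear, Prod.fst_add, Prod.snd_add, Prod.mk_add_mk]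
  congr 1
  ring

end Klein

/-- The explicit maps φ and γ on K = (ℤ/2)³ and V = (ℤ/2)²: each φ_c is an
automorphism of K, φ is a homomorphism V → Aut(K), and γ is a crosshomomorphism. -/
theorem stmt_18
    (φ : ZMod 2 × ZMod 2 → (ZMod 2 × ZMod 2 × ZMod 2) → (ZMod 2 × ZMod 2 × ZMod 2))
    (hφ : ∀ (c : ZMod 2 × ZMod 2) (a : ZMod 2 × ZMod 2 × ZMod 2),
      φ c a = (a.1 + c.2 * a.2.1 + c.1 * a.2.2, a.2.1, a.2.2))
    (γ : ZMod 2 × ZMod 2 → ZMod 2 × ZMod 2 × ZMod 2)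
    (hγ : ∀ c : ZMod 2 × ZMod 2, γ c = (c.1 + c.2 + c.1 * c.2, c.1, c.2)) :
    (∀ c, Function.Bijective (φ c) ∧
      ∀ a b : ZMod 2 × ZMod 2 × ZMod 2, φ c (a + b) = φ c a + φ c b) ∧
    (∀ c d : ZMod 2 × ZMod 2, φ (c + d) = φ c ∘ φ d) ∧
    (∀ c d : ZMod 2 × ZMod 2, γ (c + d) = γ c + φ c (γ d)) := by
  obtain rfl : φ = Klein.shear := funext fun c => funext (hφ c)
  obtain rfl : γ = Klein.twist := funext hγ
  exact ⟨fun c => ⟨Klein.shear_bijective c, Klein.shear_map_add c⟩, Klein.shear_add,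
    Klein.twist_add⟩
end

section
/- In the modification setup, assume conditions (C1) and (C2), assume that every element z ∈ Z satisfies z² = 1, and assume that x² lies in the center of G for every x ∈ G. Then for all x, y ∈ G the left and right inner mappings are involutions, L(x,y)∘L(x,y) = id and R(x,y)∘R(x,y) = id, and the middle inner mappings satisfy T(x)(T(x)z) = z·δ([z,x],x) for all x, z ∈ G; in particular, if moreover δ([z,x],x) = 1 for all x, z ∈ G, then every T(x) is also an involution and the inner mapping group of the loop (G,*) is generated by involutions. -/
/-!
All values of `μ`, hence of the associator, lie in the central exponent-two subgroup `Z`, and `μ`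
does not see multiplication by elements of `Z ≤ K`. So `L(x,y)` and `R(x,y)` multiply `w` by some
`a(w) ∈ Z` with `a(w·a(w)) = a(w)`, and applying them twice multiplies by `a(w)² = 1`.
Likewise `T(x) z = z^x · c(z)` with `c(z) ∈ Z` and `T(x)(w·c) = T(x)(w)·c`, so
`T(x)² z = z^(x²) · c(z^x) · c(z) = z · c(z^x) · c(z)` because `x²` is central. Writing
`z^x = z·[z,x]` with `[z,x] ∈ N` and expanding by (C1) and (C2), everything except
`δ([z,x],x)` cancels in pairs.
-/

open Subgroup

namespace Modification

variable {G : Type*} [Group G]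

theorem involutive_mul_of_invariant {a : G → G} (ha : ∀ w, a (w * a w) = a w)
    (ha2 : ∀ w, a w * a w = 1) : Function.Involutive fun w => w * a w := fun w => by
  simp only [ha, mul_assoc, ha2, mul_one]

open scoped IsMulCommutative in
theorem mul_mul_inv_mul_mul_inv_of_mem_center {a b p r : G} (ha : a ∈ center G)
    (hb : b ∈ center G) (hp : p ∈ center G) (hr : r ∈ center G) (ha2 : a * a = 1)
    (hb2 : b * b = 1) : a * p * b⁻¹ * (a * (b * r)⁻¹) = p * r⁻¹ := by
  lift a to center G using ha
  lift b to center G using hb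
  lift p to center G using hp
  lift r to center G using hr
  norm_cast at ha2 hb2 ⊢
  calc a * p * b⁻¹ * (a * (b * r)⁻¹) = a * a * (b * b)⁻¹ * (p * r⁻¹) := by
        simp only [mul_inv, mul_left_comm, mul_assoc]
    _ = p * r⁻¹ := by rw [ha2, hb2, inv_one, one_mul, one_mul]

def CosetInvariant (K : Subgroup G) (μ : G → G → G) : Prop :=
  ∀ x x' y y' : G, x⁻¹ * x' ∈ K → y⁻¹ * y' ∈ K → μ x y = μ x' y'

def associator (μ : G → G → G) (x y z : G) : G :=
  μ x y * μ (x * y) z * (μ x (y * z))⁻¹ * (μ y z)⁻¹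

def middleInner (μ : G → G → G) (x w : G) : G :=
  x⁻¹ * w * x * μ w x * (μ x (x⁻¹ * w * x))⁻¹

theorem associator_mem {Z : Subgroup G} {μ : G → G → G} (hμZ : ∀ x y, μ x y ∈ Z)
    (x y z : G) : associator μ x y z ∈ Z :=
  mul_mem (mul_mem (mul_mem (hμZ _ _) (hμZ _ _)) (inv_mem (hμZ _ _))) (inv_mem (hμZ _ _))

namespace CosetInvariant

variable {K : Subgroup G} {μ : G → G → G} {c : G}

theorem mul_left (h : CosetInvariant K μ) (x y : G) (hc : c ∈ K) : μ (x * c) y = μ x y :=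
  h _ _ _ _ (by simpa using inv_mem hc) (by simp)

theorem mul_right (h : CosetInvariant K μ) (x y : G) (hc : c ∈ K) : μ x (y * c) = μ x y :=
  h _ _ _ _ (by simp) (by simpa using inv_mem hc)

theorem associator_mul_right (h : CosetInvariant K μ) (x y w : G) (hc : c ∈ K) :
    associator μ x y (w * c) = associator μ x y w := by
  simp only [associator, ← mul_assoc, h.mul_right _ _ hc]

theorem associator_mul_left (h : CosetInvariant K μ) (w x y : G) (hc : c ∈ K)
    (hcc : c ∈ center G) : associator μ (w * c) x y = associator μ w x y := by
  rw [associator, associator, mul_assoc w, ← mem_center_iff.mp hcc, ← mul_assoc,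
    h.mul_left _ _ hc, h.mul_left _ _ hc, h.mul_left _ _ hc]

theorem middleInner_mul (h : CosetInvariant K μ) (x w : G) (hc : c ∈ K)
    (hcc : c ∈ center G) : middleInner μ x (w * c) = middleInner μ x w * c := by
  have hconj : x⁻¹ * (w * c) * x = x⁻¹ * w * x * c := by
    simp only [mul_assoc, (mem_center_iff.mp hcc x).symm]
  rw [middleInner, middleInner, hconj, h.mul_left _ _ hc, h.mul_right _ _ hc]
  simp only [mul_assoc, (mem_center_iff.mp hcc _).symm]

variable {Z : Subgroup G}

theorem involutive_mul_associator_left (h : CosetInvariant K μ) (hZK : Z ≤ K)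
    (hμZ : ∀ x y, μ x y ∈ Z) (hZ2 : ∀ z ∈ Z, z * z = 1) (x y : G) :
    Function.Involutive fun w => w * associator μ x y w :=
  involutive_mul_of_invariant
    (fun _ => h.associator_mul_right _ _ _ (hZK (associator_mem hμZ _ _ _)))
    (fun _ => hZ2 _ (associator_mem hμZ _ _ _))

theorem involutive_mul_associator_right (h : CosetInvariant K μ) (hZK : Z ≤ K)
    (hZc : Z ≤ center G) (hμZ : ∀ x y, μ x y ∈ Z) (hZ2 : ∀ z ∈ Z, z * z = 1) (x y : G) :
    Function.Involutive fun w => w * associator μ w x y :=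
  involutive_mul_of_invariant
    (fun _ => h.associator_mul_left _ _ _ (hZK (associator_mem hμZ _ _ _))
      (hZc (associator_mem hμZ _ _ _)))
    (fun _ => hZ2 _ (associator_mem hμZ _ _ _))

theorem middleInner_middleInner (h : CosetInvariant K μ) (hZK : Z ≤ K) (hZc : Z ≤ center G)
    (hμZ : ∀ x y, μ x y ∈ Z) {x : G} (hsq : x * x ∈ center G) (z : G) :
    middleInner μ x (middleInner μ x z) =
      z * (μ (x⁻¹ * z * x) x * (μ x z)⁻¹) * (μ z x * (μ x (x⁻¹ * z * x))⁻¹) := by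
  have hcZ : μ z x * (μ x (x⁻¹ * z * x))⁻¹ ∈ Z := mul_mem (hμZ _ _) (inv_mem (hμZ _ _))
  have hx2 : x⁻¹ * (x⁻¹ * z * x) * x = z := by
    calc x⁻¹ * (x⁻¹ * z * x) * x = (x * x)⁻¹ * (z * (x * x)) := by group
      _ = z := by rw [mem_center_iff.mp hsq z]; group
  have hTz : middleInner μ x z = x⁻¹ * z * x * (μ z x * (μ x (x⁻¹ * z * x))⁻¹) :=
    mul_assoc _ _ _
  rw [hTz, h.middleInner_mul _ _ (hZK hcZ) (hZc hcZ), middleInner, hx2, mul_assoc z]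

theorem middleInner_middleInner_eq {N : Subgroup G} (h : CosetInvariant K μ) (hZK : Z ≤ K)
    (hZc : Z ≤ center G) (hμZ : ∀ x y, μ x y ∈ Z) (hZ2 : ∀ z ∈ Z, z * z = 1)
    (hC1 : ∀ x y z : G, (x ∈ N ∨ y ∈ N ∨ z ∈ N) → μ (x * y) z = μ x z * μ y z)
    (hC2 : ∀ x y z : G, (x ∈ N ∨ y ∈ N ∨ z ∈ N) → μ x (y * z) = μ x y * μ x z)
    {x z : G} (hsq : x * x ∈ center G) (hq : z⁻¹ * x⁻¹ * z * x ∈ N) :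
    middleInner μ x (middleInner μ x z) =
      z * (μ (z⁻¹ * x⁻¹ * z * x) x * (μ x (z⁻¹ * x⁻¹ * z * x))⁻¹) := by
  have hconj : x⁻¹ * z * x = z * (z⁻¹ * x⁻¹ * z * x) := by group
  rw [h.middleInner_middleInner hZK hZc hμZ hsq, hconj, hC1 _ _ _ (Or.inr (Or.inl hq)),
    hC2 _ _ _ (Or.inr (Or.inr hq)), mul_assoc z]
  congr 1
  have hc (x y : G) : μ x y ∈ center G := hZc (hμZ x y)
  exact mul_mul_inv_mul_mul_inv_of_mem_center (hc _ _) (hc _ _) (hc _ _) (hc _ _)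
    (hZ2 _ (hμZ _ _)) (hZ2 _ (hμZ _ _))

end CosetInvariant

end Modification

open Modification

theorem stmt_19_general {G : Type*} [Group G] (Z K N : Subgroup G)
    (hZK : Z ≤ K)
    (hGN : ∀ x y : G, x⁻¹ * y⁻¹ * x * y ∈ N)
    (hZcentral : Z ≤ Subgroup.center G)
    (μ : G → G → G)
    (hμZ : ∀ x y : G, μ x y ∈ Z)
    (hμK : ∀ x x' y y' : G, x⁻¹ * x' ∈ K → y⁻¹ * y' ∈ K → μ x y = μ x' y')
    (δ : G → G → G) (hδ : ∀ x y : G, δ x y = μ x y * (μ y x)⁻¹)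
    (A : G → G → G → G)
    (hA : ∀ x y z : G, A x y z = μ x y * μ (x * y) z * (μ x (y * z))⁻¹ * (μ y z)⁻¹)
    (L : G → G → G → G) (hL : ∀ x y w : G, L x y w = w * A x y w)
    (R : G → G → G → G) (hR : ∀ x y w : G, R x y w = w * A w x y)
    (T : G → G → G)
    (hT : ∀ x w : G, T x w = (x⁻¹ * w * x) * μ w x * (μ x (x⁻¹ * w * x))⁻¹)
    (hC1 : ∀ x y z : G, (x ∈ N ∨ y ∈ N ∨ z ∈ N) → μ (x * y) z = μ x z * μ y z)
    (hC2 : ∀ x y z : G, (x ∈ N ∨ y ∈ N ∨ z ∈ N) → μ x (y * z) = μ x y * μ x z)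
    (hZ2 : ∀ z ∈ Z, z * z = 1)
    (hsq : ∀ x : G, x * x ∈ Subgroup.center G) :
    (∀ x y : G, L x y ∘ L x y = id ∧ R x y ∘ R x y = id) ∧
    (∀ x z : G, T x (T x z) = z * δ (z⁻¹ * x⁻¹ * z * x) x) ∧
    ((∀ x z : G, δ (z⁻¹ * x⁻¹ * z * x) x = 1) → ∀ x : G, T x ∘ T x = id) := by
  have hμ : CosetInvariant K μ := hμK
  obtain rfl : A = associator μ := funext fun x => funext fun y => funext (hA x y)
  obtain rfl : T = middleInner μ := funext fun x => funext (hT x)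
  have hT2 (x z : G) :
      middleInner μ x (middleInner μ x z) = z * δ (z⁻¹ * x⁻¹ * z * x) x := by
    rw [hδ]
    exact hμ.middleInner_middleInner_eq hZK hZcentral hμZ hZ2 hC1 hC2 (hsq x) (hGN z x)
  refine ⟨fun x y => ⟨?_, ?_⟩, hT2, fun hδ1 x => funext fun z => by
    rw [Function.comp_apply, hT2, hδ1, mul_one, id_eq]⟩
  · rw [show L x y = _ from funext (hL x y)]
    exact (hμ.involutive_mul_associator_left hZK hμZ hZ2 x y).comp_self
  · rw [show R x y = _ from funext (hR x y)]
    exact (hμ.involutive_mul_associator_right hZK hZcentral hμZ hZ2 x y).comp_self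

/-- In the modification setup, under (C1), (C2), exponent-two Z, and central squares,
the left and right inner mappings are involutions, T(x)² z = z·δ([z,x],x), and if
δ([z,x],x) = 1 always then every T(x) is an involution. -/
theorem stmt_19 {G : Type*} [Group G] (Z K N : Subgroup G)
    (hZK : Z ≤ K) (hKN : K ≤ N)
    (hNnormal : N.Normal)
    (hNab : ∀ a ∈ N, ∀ b ∈ N, a * b = b * a)
    (hGN : ∀ x y : G, x⁻¹ * y⁻¹ * x * y ∈ N)
    (hZcentral : Z ≤ Subgroup.center G)
    (hKnormal : K.Normal)
    (hNK : ∀ n ∈ N, ∀ g : G, n⁻¹ * g⁻¹ * n * g ∈ K)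
    (μ : G → G → G)
    (hμZ : ∀ x y : G, μ x y ∈ Z)
    (hμK : ∀ x x' y y' : G, x⁻¹ * x' ∈ K → y⁻¹ * y' ∈ K → μ x y = μ x' y')
    (hμ1 : ∀ x : G, μ x 1 = 1) (hμ1' : ∀ x : G, μ 1 x = 1)
    (δ : G → G → G) (hδ : ∀ x y : G, δ x y = μ x y * (μ y x)⁻¹)
    (A : G → G → G → G)
    (hA : ∀ x y z : G, A x y z = μ x y * μ (x * y) z * (μ x (y * z))⁻¹ * (μ y z)⁻¹)
    (L : G → G → G → G) (hL : ∀ x y w : G, L x y w = w * A x y w)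
    (R : G → G → G → G) (hR : ∀ x y w : G, R x y w = w * A w x y)
    (T : G → G → G)
    (hT : ∀ x w : G, T x w = (x⁻¹ * w * x) * μ w x * (μ x (x⁻¹ * w * x))⁻¹)
    (hC1 : ∀ x y z : G, (x ∈ N ∨ y ∈ N ∨ z ∈ N) → μ (x * y) z = μ x z * μ y z)
    (hC2 : ∀ x y z : G, (x ∈ N ∨ y ∈ N ∨ z ∈ N) → μ x (y * z) = μ x y * μ x z)
    (hZ2 : ∀ z ∈ Z, z * z = 1)
    (hsq : ∀ x : G, x * x ∈ Subgroup.center G) :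
    (∀ x y : G, L x y ∘ L x y = id ∧ R x y ∘ R x y = id) ∧
    (∀ x z : G, T x (T x z) = z * δ (z⁻¹ * x⁻¹ * z * x) x) ∧
    ((∀ x z : G, δ (z⁻¹ * x⁻¹ * z * x) x = 1) → ∀ x : G, T x ∘ T x = id) :=
  stmt_19_general Z K N hZK hGN hZcentral μ hμZ hμK δ hδ A hA L hL R hR T hT hC1 hC2 hZ2 hsq
end
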